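/- arXiv:1012.0287 — 11 statements merged into one kernel-verified Lean document; each statement's English description precedes it below -/
import Mathlib

section
/- Let R be a positive integer vector in N^{n+1} and Λ a full-rank sublattice of Λ_R = {D ∈ Z^{n+1} : D·R = 0}. Define Σ_R(Λ) = {x ∈ R^{n+1} : x ≱ p for all p ∈ Λ}. Then the topological closure of Σ_R(Λ) equals {x ∈ R^{n+1} : x ≯ p for all p ∈ Λ}. -/
/-- The closure of Σ_R(Λ) = {x : x ≱ p for all p ∈ Λ} equals
{x : x ≯ p for all p ∈ Λ}. -/
theorem stmt_0 (n : ℕ) (R : Fin (n + 1) → ℤ) (hR : ∀ i, 0 < R i)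
    (Λ : AddSubgroup (Fin (n + 1) → ℤ))
    (hΛR : ∀ p ∈ Λ, ∑ i, p i * R i = 0)
    (hfull : ∀ x : Fin (n + 1) → ℤ, (∑ i, x i * R i = 0) →
      ∃ k : ℤ, k ≠ 0 ∧ k • x ∈ Λ) :
    closure {x : Fin (n + 1) → ℝ | ∀ p ∈ Λ, ¬ ((fun i => (p i : ℝ)) ≤ x)} =
      {x : Fin (n + 1) → ℝ | ∀ p ∈ Λ, ¬ (∀ i, (p i : ℝ) < x i)} := by
  apply Set.Subset.antisymm
  · apply closure_minimal
    · intro x hx p hp hlt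
      exact hx p hp (fun i => (hlt i).le)
    · have heq : {x : Fin (n + 1) → ℝ | ∀ p ∈ Λ, ¬ (∀ i, (p i : ℝ) < x i)} =
          ⋂ p ∈ (Λ : Set (Fin (n + 1) → ℤ)),
            {x : Fin (n + 1) → ℝ | ∀ i, (p i : ℝ) < x i}ᶜ := by
        ext x; simp
      rw [heq]
      refine isClosed_biInter fun p _ => (IsOpen.isClosed_compl ?_)
      have heq2 : {x : Fin (n + 1) → ℝ | ∀ i, (p i : ℝ) < x i} =
          ⋂ i, {x : Fin (n + 1) → ℝ | (p i : ℝ) < x i} := by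
        ext x; simp
      rw [heq2]
      exact isOpen_iInter_of_finite fun i =>
        isOpen_lt continuous_const (continuous_apply i)
  · intro x hx
    have htend : Filter.Tendsto (fun m : ℕ => fun i => x i - 1 / (m + 1))
        Filter.atTop (nhds x) := by
      rw [tendsto_pi_nhds]
      intro i
      have h0 : Filter.Tendsto (fun n : ℕ => 1 / ((n : ℝ) + 1)) Filter.atTop (nhds 0) :=
        tendsto_one_div_add_atTop_nhds_zero_nat
      simpa using Filter.Tendsto.const_sub (x i) h0
    refine mem_closure_of_tendsto htend (Filter.Eventually.of_forall fun m => ?_)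
    intro p hp hle
    obtain ⟨i, hi⟩ : ∃ i, ¬ ((p i : ℝ) < x i) := by
      by_contra h; push_neg at h; exact hx p hp h
    push_neg at hi
    have h1 : (p i : ℝ) ≤ x i - 1 / (m + 1) := hle i
    have hpos : (0 : ℝ) < 1 / (m + 1) := by positivity
    linarith
end

section
/- Let R ∈ N^{n+1} be positive and Λ ⊆ Λ_R a rank-n sublattice. For every divisor D ∈ Z^{n+1}, r(D) = dist_R(D, Σ(Λ)) − 1, where dist_R(x,y) = Σ_i r_i|x_i − y_i| is the weighted taxicab distance and dist_R(D, S) = min over p ∈ S of dist_R(D, p). -/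
/-- The degree of a divisor with respect to the weight vector `R`. -/
def degR (n : ℕ) (R : Fin (n + 1) → ℤ) (D : Fin (n + 1) → ℤ) : ℤ :=
  ∑ i, D i * R i

/-- The rank of a divisor:
`r(D) = min{deg_R(E) : E ≥ 0, |D−E| = ∅} − 1`. -/
noncomputable def rk (n : ℕ) (R : Fin (n + 1) → ℤ)
    (Λ : AddSubgroup (Fin (n + 1) → ℤ)) (D : Fin (n + 1) → ℤ) : ℤ :=
  sInf {d : ℤ | ∃ E : Fin (n + 1) → ℤ, 0 ≤ E ∧
    (∀ F : Fin (n + 1) → ℤ, 0 ≤ F → (D - E) - F ∉ Λ) ∧ d = degR n R E} - 1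

/-- r(D) equals the weighted taxicab distance from D to Σ(Λ),
minus one: r(D) = min{Σ_i r_i |D_i − p_i| : p ∈ Σ(Λ)} − 1. -/
theorem stmt_3 (n : ℕ) (R : Fin (n + 1) → ℤ) (hR : ∀ i, 0 < R i)
    (Λ : AddSubgroup (Fin (n + 1) → ℤ))
    (hΛR : ∀ p ∈ Λ, ∑ i, p i * R i = 0)
    (hfull : ∀ x : Fin (n + 1) → ℤ, (∑ i, x i * R i = 0) →
      ∃ k : ℤ, k ≠ 0 ∧ k • x ∈ Λ)
    (D : Fin (n + 1) → ℤ) :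
    rk n R Λ D =
      sInf {d : ℤ | ∃ p : Fin (n + 1) → ℤ, (∀ q ∈ Λ, ¬ (q ≤ p)) ∧
        d = ∑ i, R i * |D i - p i|} - 1 := by
  set A := {d : ℤ | ∃ E : Fin (n + 1) → ℤ, 0 ≤ E ∧
    (∀ F : Fin (n + 1) → ℤ, 0 ≤ F → (D - E) - F ∉ Λ) ∧ d = degR n R E} with hA
  set B := {d : ℤ | ∃ p : Fin (n + 1) → ℤ, (∀ q ∈ Λ, ¬ (q ≤ p)) ∧
    d = ∑ i, R i * |D i - p i|} with hB
  have hAB : A ⊆ B := by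
    rintro d ⟨E, hE0, hEm, rfl⟩
    refine ⟨D - E, ?_, ?_⟩
    · intro q hq hle
      refine hEm (D - E - q) ?_ ?_
      · intro i
        simpa [sub_nonneg] using hle i
      · simpa using hq
    · simp only [degR]
      refine Finset.sum_congr rfl fun i _ => ?_
      have : D i - (D - E) i = E i := by simp
      rw [this, abs_of_nonneg (hE0 i), mul_comm]
  have hBA : ∀ d ∈ B, ∃ d' ∈ A, d' ≤ d := by
    rintro d ⟨p, hp, rfl⟩
    refine ⟨degR n R (fun i => max (D i - p i) 0), ⟨fun i => max (D i - p i) 0,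
      fun i => le_max_right _ _, ?_, rfl⟩, ?_⟩
    · intro F hF hmem
      refine hp _ hmem ?_
      intro i
      have h1 : D i - p i ≤ max (D i - p i) 0 := le_max_left _ _
      have h2 : 0 ≤ F i := hF i
      show D i - max (D i - p i) 0 - F i ≤ p i
      linarith
    · refine Finset.sum_le_sum fun i _ => ?_
      have h1 : max (D i - p i) 0 ≤ |D i - p i| :=
        max_le (le_abs_self _) (abs_nonneg _)
      calc max (D i - p i) 0 * R i = R i * max (D i - p i) 0 := mul_comm _ _
        _ ≤ R i * |D i - p i| := mul_le_mul_of_nonneg_left h1 (hR i).le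
  have hBne : B.Nonempty := by
    refine ⟨∑ i, R i * |D i - (-1)|, fun _ => (-1 : ℤ), ?_, rfl⟩
    intro q hq hle
    have h0 := hΛR q hq
    have hsum : ∑ i, q i * R i ≤ ∑ i, (-1 : ℤ) * R i :=
      Finset.sum_le_sum fun i _ => mul_le_mul_of_nonneg_right (hle i) (hR i).le
    have hpos : 0 < ∑ i, R i :=
      Finset.sum_pos (fun i _ => hR i) Finset.univ_nonempty
    have : ∑ i, (-1 : ℤ) * R i = -∑ i, R i := by
      simp [Finset.sum_neg_distrib, neg_mul]
    omega
  obtain ⟨b, hbB⟩ := hBne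
  obtain ⟨a, haA, hab⟩ := hBA b hbB
  have hAne : A.Nonempty := ⟨a, haA⟩
  have hBbdd : BddBelow B := by
    refine ⟨0, fun d hd => ?_⟩
    obtain ⟨p, _, rfl⟩ := hd
    exact Finset.sum_nonneg fun i _ => mul_nonneg (hR i).le (abs_nonneg _)
  have hAbdd : BddBelow A := by
    refine ⟨0, fun d hd => ?_⟩
    obtain ⟨E, hE0, _, rfl⟩ := hd
    exact Finset.sum_nonneg fun i _ => mul_nonneg (hE0 i) (hR i).le
  have key : sInf A = sInf B := by
    refine le_antisymm ?_ (csInf_le_csInf hBbdd hAne hAB)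
    have hmem := Int.csInf_mem ⟨b, hbB⟩ hBbdd
    obtain ⟨d', hd'A, hd'le⟩ := hBA _ hmem
    exact le_trans (csInf_le hAbdd hd'A) hd'le
  rw [rk]
  show sInf A - 1 = sInf B - 1
  rw [key]
end

section
/- Let R ∈ N^{n+1} be positive. For any two vectors p, q in the hyperplane H_R = {x : R·x = 0}, the gauge function d_{Δ_R}(p,q) = inf{λ ≥ 0 : q ∈ p + λΔ_R} satisfies d_{Δ_R}(p,q) = max over 0 ≤ i ≤ n of (q_i − p_i)/r_i, where Δ_R = H_R ∩ C^-(R) and C^-(R) = {y : y ≤ R}. -/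
open Finset

/-- For p, q in the hyperplane H_R, the gauge
d_{Δ_R}(p,q) = inf{λ ≥ 0 : q ∈ p + λΔ_R} equals max_i (q_i − p_i)/r_i,
where Δ_R = H_R ∩ {y : y ≤ R}. -/
theorem stmt_4 (n : ℕ) (R : Fin (n + 1) → ℤ) (hR : ∀ i, 0 < R i)
    (p q : Fin (n + 1) → ℝ)
    (hp : ∑ i, (R i : ℝ) * p i = 0) (hq : ∑ i, (R i : ℝ) * q i = 0) :
    sInf {lam : ℝ | 0 ≤ lam ∧ ∃ y : Fin (n + 1) → ℝ,
        (∑ i, (R i : ℝ) * y i = 0) ∧ (∀ i, y i ≤ (R i : ℝ)) ∧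
        q = p + lam • y} =
      Finset.univ.sup' Finset.univ_nonempty
        (fun i => (q i - p i) / (R i : ℝ)) := by
  have hRpos : ∀ i, (0 : ℝ) < (R i : ℝ) := fun i => by exact_mod_cast hR i
  set M : ℝ := Finset.univ.sup' Finset.univ_nonempty
      (fun i => (q i - p i) / (R i : ℝ)) with hM
  have hd : ∑ i, (R i : ℝ) * (q i - p i) = 0 := by
    simp [mul_sub, Finset.sum_sub_distrib, hp, hq]
  have hle : ∀ i, (q i - p i) / (R i : ℝ) ≤ M := by
    intro i
    exact Finset.le_sup' (fun i => (q i - p i) / (R i : ℝ)) (Finset.mem_univ i)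
  have hM0 : 0 ≤ M := by
    by_contra h
    push_neg at h
    have : ∑ i, (R i : ℝ) * (q i - p i) < 0 := by
      have : ∀ i ∈ (Finset.univ : Finset (Fin (n+1))),
          (R i : ℝ) * (q i - p i) < 0 := by
        intro i _
        have h1 : (q i - p i) / (R i : ℝ) < 0 := lt_of_le_of_lt (hle i) h
        have h2 : q i - p i < 0 := by
          have := (div_neg_iff).mp h1
          rcases this with ⟨_, h⟩ | ⟨h, _⟩
          · linarith [hRpos i]
          · exact h
        exact mul_neg_of_pos_of_neg (hRpos i) h2
      calc ∑ i, (R i : ℝ) * (q i - p i)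
          < ∑ _i : Fin (n+1), (0:ℝ) :=
            Finset.sum_lt_sum_of_nonempty Finset.univ_nonempty this
        _ = 0 := by simp
    linarith
  apply IsLeast.csInf_eq
  constructor
  · -- M is in the set
    refine ⟨hM0, ?_⟩
    rcases eq_or_lt_of_le hM0 with h0 | hpos
    · -- M = 0 : then q = p, take y = 0
      refine ⟨0, by simp, fun i => le_of_lt (hRpos i), ?_⟩
      have hqp : ∀ i, q i = p i := by
        have hterm : ∀ i ∈ (Finset.univ : Finset (Fin (n+1))),
            (R i : ℝ) * (q i - p i) ≤ 0 := by
          intro i _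
          have h1 : (q i - p i) / (R i : ℝ) ≤ 0 := h0 ▸ hle i
          have h2 : q i - p i ≤ 0 := by
            by_contra hc
            push_neg at hc
            have := div_pos hc (hRpos i)
            linarith
          exact mul_nonpos_of_nonneg_of_nonpos (le_of_lt (hRpos i)) h2
        have := (Finset.sum_eq_zero_iff_of_nonpos hterm).mp hd
        intro i
        have hi := this i (Finset.mem_univ i)
        have := hRpos i
        nlinarith
      funext i
      simp [hqp i]
    · -- M > 0 : take y = (q - p) / M
      refine ⟨fun i => (q i - p i) / M, ?_, ?_, ?_⟩
      · simp only [← mul_div_assoc]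
        rw [← Finset.sum_div, hd, zero_div]
      · intro i
        have h1 : q i - p i ≤ M * (R i : ℝ) :=
          (div_le_iff₀ (hRpos i)).mp (hle i)
        rw [div_le_iff₀ hpos]
        linarith
      · funext i
        simp only [Pi.add_apply, Pi.smul_apply, smul_eq_mul]
        field_simp
        ring
  · -- M is a lower bound
    rintro lam ⟨hlam0, y, hy0, hyle, hqy⟩
    apply Finset.sup'_le
    intro i _
    have hqi : q i - p i = lam * y i := by
      have := congrFun hqy i
      simp only [Pi.add_apply, Pi.smul_apply, smul_eq_mul] at this
      linarith
    rw [div_le_iff₀ (hRpos i), hqi]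
    have := hyle i
    nlinarith
end

section
/- Let R ∈ N^{n+1} be positive and Λ ⊆ Λ_R a rank-n sublattice. A point p ∈ closure(Σ_R(Λ)) \ Λ is an extreme point of closure(Σ_R(Λ)) if and only if each of the n+1 facets of the simplex Δ_R(p) contains a point of Λ in its relative interior. -/
/-- The real Sigma region Σ_ℝ(Λ). -/
def SigmaR (n : ℕ) (Λ : AddSubgroup (Fin (n + 1) → ℤ)) : Set (Fin (n + 1) → ℝ) :=
  {x | ∀ p ∈ Λ, ¬ ((fun i => (p i : ℝ)) ≤ x)}

/-- Extreme points of the closure of Σ_ℝ(Λ): local maxima of deg_R. -/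
def ExtClosure (n : ℕ) (R : Fin (n + 1) → ℤ)
    (Λ : AddSubgroup (Fin (n + 1) → ℤ)) : Set (Fin (n + 1) → ℝ) :=
  {ν ∈ closure (SigmaR n Λ) | ∃ δ > (0 : ℝ), ∀ x ∈ closure (SigmaR n Λ),
    dist x ν ≤ δ → ∑ i, (R i : ℝ) * x i ≤ ∑ i, (R i : ℝ) * ν i}

/-- The closure of Σ_ℝ(Λ) is the set of points not strictly above any lattice point. -/
lemma closure_sigmaR (n : ℕ) (Λ : AddSubgroup (Fin (n + 1) → ℤ)) :
    closure (SigmaR n Λ) = {x | ∀ q ∈ Λ, ¬ ∀ i, (q i : ℝ) < x i} := by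
  apply le_antisymm
  · apply closure_minimal
    · intro x hx q hq hlt
      exact hx q hq (fun i => (hlt i).le)
    · have : {x : Fin (n+1) → ℝ | ∀ q ∈ Λ, ¬ ∀ i, (q i : ℝ) < x i}
          = ⋂ q ∈ (Λ : Set (Fin (n+1) → ℤ)), (⋂ i, {x : Fin (n+1) → ℝ | (q i : ℝ) < x i})ᶜ := by
        ext x
        simp [Set.mem_iInter]
      rw [this]
      refine isClosed_biInter fun q _ => ?_
      exact (isOpen_iInter_of_finite fun i =>
        isOpen_lt continuous_const (continuous_apply i)).isClosed_compl
  · intro x hx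
    rw [Metric.mem_closure_iff]
    intro ε hε
    refine ⟨fun i => x i - ε / 2, ?_, ?_⟩
    · intro q hq hle
      exact hx q hq fun i => lt_of_le_of_lt (hle i) (by linarith)
    · have : dist x (fun i => x i - ε / 2) ≤ ε / 2 := by
        rw [dist_pi_le_iff (by linarith)]
        intro i
        rw [Real.dist_eq]
        have : x i - (x i - ε / 2) = ε / 2 := by ring
        rw [this, abs_of_nonneg (by linarith)]
      linarith

theorem stmt_6 (n : ℕ) (R : Fin (n + 1) → ℤ) (hR : ∀ i, 0 < R i)
    (Λ : AddSubgroup (Fin (n + 1) → ℤ))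
    (hΛR : ∀ p ∈ Λ, ∑ i, p i * R i = 0)
    (hfull : ∀ x : Fin (n + 1) → ℤ, (∑ i, x i * R i = 0) →
      ∃ k : ℤ, k ≠ 0 ∧ k • x ∈ Λ)
    (p : Fin (n + 1) → ℝ) (hmem : p ∈ closure (SigmaR n Λ))
    (hnotlat : ¬ ∃ q ∈ Λ, ∀ i, p i = (q i : ℝ)) :
    p ∈ ExtClosure n R Λ ↔
      ∀ i : Fin (n + 1), ∃ q ∈ Λ,
        (q i : ℝ) = p i ∧ ∀ j, j ≠ i → (q j : ℝ) < p j := by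
  have hmem' : ∀ q ∈ Λ, ¬ ∀ j, (q j : ℝ) < p j := by
    rw [closure_sigmaR] at hmem; exact hmem
  constructor
  · rintro ⟨hp, δ, hδ, hmax⟩ i
    by_contra hno
    push_neg at hno
    -- move p up in coordinate i by t > 0
    set g : ℝ := (⌊p i⌋ : ℝ) + 1 - p i with hg
    have hg0 : 0 < g := by
      have := Int.lt_floor_add_one (p i)
      linarith
    set t : ℝ := min δ g with ht
    have ht0 : 0 < t := lt_min hδ hg0
    set x : Fin (n+1) → ℝ := Function.update p i (p i + t) with hxdef
    have hxj : ∀ j, j ≠ i → x j = p j := fun j hj => Function.update_of_ne hj _ _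
    have hxi : x i = p i + t := Function.update_self _ _ _
    have hxcl : x ∈ closure (SigmaR n Λ) := by
      rw [closure_sigmaR]
      intro q hq hlt
      have hqi : p i < (q i : ℝ) := by
        rcases lt_trichotomy ((q i : ℝ)) (p i) with h | h | h
        · exact absurd (fun j => by
            by_cases hj : j = i
            · subst hj; exact h
            · have := hlt j; rwa [hxj j hj] at this) (hmem' q hq)
        · obtain ⟨j, hj, hge⟩ := hno q hq h
          have := hlt j
          rw [hxj j hj] at this
          linarith
        · exact h
      -- q i is an integer > p i, hence ≥ ⌊p i⌋ + 1 = p i + g ≥ p i + t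
      have h1 : ⌊p i⌋ + 1 ≤ q i := by
        have : ⌊p i⌋ < q i := by
          by_contra hc
          push_neg at hc
          have : (q i : ℝ) ≤ (⌊p i⌋ : ℝ) := by exact_mod_cast hc
          have := Int.floor_le (p i)
          linarith
        omega
      have h1' : ((⌊p i⌋ : ℝ) + 1) ≤ (q i : ℝ) := by exact_mod_cast h1
      have h2 : (q i : ℝ) < x i := hlt i
      rw [hxi] at h2
      have : t ≤ g := min_le_right _ _
      have : p i + t ≤ (⌊p i⌋ : ℝ) + 1 := by simp only [hg] at this ⊢; linarith
      linarith
    have hdist : dist x p ≤ δ := by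
      rw [dist_pi_le_iff hδ.le]
      intro j
      by_cases hj : j = i
      · subst hj
        rw [hxi, Real.dist_eq]
        have : p j + t - p j = t := by ring
        rw [this, abs_of_pos ht0]
        exact min_le_left _ _
      · rw [hxj j hj, dist_self]; exact hδ.le
    have hsum : ∑ j, (R j : ℝ) * x j = (∑ j, (R j : ℝ) * p j) + (R i : ℝ) * t := by
      have : ∀ j ∈ Finset.univ, (R j : ℝ) * x j
          = (R j : ℝ) * p j + (if j = i then (R i : ℝ) * t else 0) := by
        intro j _
        by_cases hj : j = i
        · subst hj; rw [hxi]; simp; ring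
        · rw [hxj j hj]; simp [hj]
      rw [Finset.sum_congr rfl this, Finset.sum_add_distrib, Finset.sum_ite_eq' Finset.univ i]
      simp
    have hRi : (0 : ℝ) < (R i : ℝ) := by exact_mod_cast hR i
    have := hmax x hxcl hdist
    rw [hsum] at this
    nlinarith
  · intro h
    refine ⟨hmem, ?_⟩
    choose q hqΛ hqi hqlt using h
    -- minimal gap over all pairs
    set f : Fin (n+1) × Fin (n+1) → ℝ :=
      fun ij => if ij.2 = ij.1 then 1 else p ij.2 - (q ij.1 ij.2 : ℝ) with hf
    have hne : (Finset.univ : Finset (Fin (n+1) × Fin (n+1))).Nonempty := ⟨(0,0), Finset.mem_univ _⟩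
    set δ₀ : ℝ := Finset.univ.inf' hne f with hδ₀
    have hδ₀pos : 0 < δ₀ := by
      rw [hδ₀, Finset.lt_inf'_iff]
      rintro ⟨i, j⟩ _
      by_cases hj : j = i
      · simp [hf, hj]
      · simp only [hf, if_neg hj]
        have := hqlt i j hj
        linarith
    refine ⟨δ₀ / 2, by linarith, ?_⟩
    intro x hx hdist
    by_contra hgt
    push_neg at hgt
    -- some coordinate of x exceeds p
    have hex : ∃ i, p i < x i := by
      by_contra hc
      push_neg at hc
      have : ∑ i, (R i : ℝ) * x i ≤ ∑ i, (R i : ℝ) * p i := by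
        apply Finset.sum_le_sum
        intro i _
        have hRi : (0 : ℝ) ≤ (R i : ℝ) := by exact_mod_cast (hR i).le
        exact mul_le_mul_of_nonneg_left (hc i) hRi
      linarith
    obtain ⟨i, hi⟩ := hex
    rw [closure_sigmaR] at hx
    apply hx (q i) (hqΛ i)
    intro j
    by_cases hj : j = i
    · subst hj; rw [hqi j]; exact hi
    · have hgap : δ₀ ≤ p j - (q i j : ℝ) := by
        have h0 := Finset.inf'_le f (Finset.mem_univ (i, j))
        have heq : f (i, j) = p j - (q i j : ℝ) := by simp [hf, hj]
        exact le_trans h0 (le_of_eq heq)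
      have hdj : dist (x j) (p j) ≤ δ₀ / 2 := le_trans (dist_le_pi_dist x p j) hdist
      rw [Real.dist_eq] at hdj
      have : p j - δ₀ / 2 ≤ x j := by
        cases abs_le.mp hdj with
        | intro h1 h2 => linarith
      linarith
end

section
/- Let R ∈ N^{n+1} be positive and Λ ⊆ Λ_R a rank-n sublattice. Every extreme point of the closure of Σ_R(Λ) has integer coordinates, i.e., Ext(closure(Σ_R(Λ))) ⊆ Z^{n+1}. -/
lemma mem_C_of_mem_closure {n : ℕ} {Λ : AddSubgroup (Fin (n + 1) → ℤ)}
    {x : Fin (n + 1) → ℝ} (hx : x ∈ closure (SigmaR n Λ)) :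
    ∀ p ∈ Λ, ∃ j, x j ≤ (p j : ℝ) := by
  intro p hp
  have hsub : SigmaR n Λ ⊆ {y : Fin (n + 1) → ℝ | ∃ j, y j ≤ (p j : ℝ)} := by
    intro y hy
    have h := hy p hp
    rw [Pi.le_def] at h
    push_neg at h
    obtain ⟨j, hj⟩ := h
    exact ⟨j, hj.le⟩
  have hclosed : IsClosed {y : Fin (n + 1) → ℝ | ∃ j, y j ≤ (p j : ℝ)} := by
    have : {y : Fin (n + 1) → ℝ | ∃ j, y j ≤ (p j : ℝ)}
        = ⋃ j, {y : Fin (n + 1) → ℝ | y j ≤ (p j : ℝ)} := Set.setOf_exists _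
    rw [this]
    exact isClosed_iUnion_of_finite fun j =>
      isClosed_le (continuous_apply j) continuous_const
  exact closure_minimal hsub hclosed hx

lemma mem_closure_of_C {n : ℕ} {Λ : AddSubgroup (Fin (n + 1) → ℤ)}
    {x : Fin (n + 1) → ℝ} (hx : ∀ p ∈ Λ, ∃ j, x j ≤ (p j : ℝ)) :
    x ∈ closure (SigmaR n Λ) := by
  rw [Metric.mem_closure_iff]
  intro ε hε
  refine ⟨fun j => x j - ε / 2, ?_, ?_⟩
  · intro p hp hle
    obtain ⟨j, hj⟩ := hx p hp
    have := hle j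
    simp only at this
    linarith
  · rw [dist_pi_lt_iff hε]
    intro j
    rw [Real.dist_eq]
    rw [show x j - (x j - ε / 2) = ε / 2 by ring]
    rw [abs_of_pos (by linarith)]
    linarith

/-- every extreme point of closure(Σ_ℝ(Λ)) has integer
coordinates. -/
theorem stmt_7 (n : ℕ) (R : Fin (n + 1) → ℤ) (hR : ∀ i, 0 < R i)
    (Λ : AddSubgroup (Fin (n + 1) → ℤ))
    (hΛR : ∀ p ∈ Λ, ∑ i, p i * R i = 0)
    (hfull : ∀ x : Fin (n + 1) → ℤ, (∑ i, x i * R i = 0) →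
      ∃ k : ℤ, k ≠ 0 ∧ k • x ∈ Λ) :
    ∀ p ∈ ExtClosure n R Λ, ∃ D : Fin (n + 1) → ℤ, ∀ i, p i = (D i : ℝ) := by
  intro ν hν
  obtain ⟨hνcl, δ, hδ, hmax⟩ := hν
  have key : ∀ i, ∃ d : ℤ, ν i = (d : ℝ) := by
    intro i
    by_contra hint
    push_neg at hint
    -- gap to the ceiling is positive
    have hlt : ν i < (⌈ν i⌉ : ℝ) :=
      lt_of_le_of_ne (Int.le_ceil _) (fun h => hint ⌈ν i⌉ h)
    set gap : ℝ := (⌈ν i⌉ : ℝ) - ν i with hgap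
    have hgappos : 0 < gap := by simp [hgap]; linarith
    set t : ℝ := min gap δ with ht
    have htpos : 0 < t := lt_min hgappos hδ
    set x : Fin (n + 1) → ℝ := fun j => ν j + if j = i then t else 0 with hx
    have hxC : ∀ p ∈ Λ, ∃ j, x j ≤ (p j : ℝ) := by
      intro p hp
      obtain ⟨j, hj⟩ := mem_C_of_mem_closure hνcl p hp
      by_cases hji : j = i
      · subst hji
        refine ⟨j, ?_⟩
        have hceil : (⌈ν j⌉ : ℝ) ≤ (p j : ℝ) := by
          exact_mod_cast Int.cast_le.mpr (Int.ceil_le.mpr hj)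
        have : t ≤ gap := min_le_left _ _
        simp only [hx, if_pos rfl, if_true]
        rw [hgap] at this
        linarith
      · exact ⟨j, by simp [hx, hji, hj]⟩
    have hxcl : x ∈ closure (SigmaR n Λ) := mem_closure_of_C hxC
    have hdist : dist x ν ≤ δ := by
      rw [dist_pi_le_iff hδ.le]
      intro j
      rw [Real.dist_eq]
      by_cases hji : j = i
      · subst hji
        simp only [hx, if_pos rfl, if_true]
        rw [show ν j + t - ν j = t by ring, abs_of_pos htpos]
        exact min_le_right _ _
      · simp [hx, hji, hδ.le]
    have hsum := hmax x hxcl hdist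
    have hxsum : ∑ j, (R j : ℝ) * x j
        = (∑ j, (R j : ℝ) * ν j) + (R i : ℝ) * t := by
      simp only [hx, mul_add, Finset.sum_add_distrib, mul_ite, mul_zero]
      rw [Finset.sum_ite_eq' Finset.univ i (fun j => (R j : ℝ) * t)]
      simp
    have hRi : (0 : ℝ) < (R i : ℝ) := by exact_mod_cast hR i
    nlinarith
  exact ⟨fun i => (key i).choose, fun i => (key i).choose_spec⟩
end

section
/- Let R ∈ N^{n+1} be positive and Λ ⊆ Λ_R a rank-n sublattice. A divisor ν ∈ Z^{n+1} is an extreme point of Σ(Λ) if and only if ν + 1⃗ is an extreme point of the closure of Σ_R(Λ). -/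
/-- The (integer) Sigma region Σ(Λ). -/
def SigmaSet (n : ℕ) (Λ : AddSubgroup (Fin (n + 1) → ℤ)) :
    Set (Fin (n + 1) → ℤ) :=
  {D | ∀ p ∈ Λ, ¬ (p ≤ D)}

/-- Extreme divisors of Σ(Λ): ν ∈ Σ(Λ) maximizing deg_R among the points of
Σ(Λ) at ℓ¹-distance at most 1 from ν. -/
def ExtSigma (n : ℕ) (R : Fin (n + 1) → ℤ)
    (Λ : AddSubgroup (Fin (n + 1) → ℤ)) : Set (Fin (n + 1) → ℤ) :=
  {ν ∈ SigmaSet n Λ | ∀ p ∈ SigmaSet n Λ,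
    (∑ i, |p i - ν i|) ≤ 1 → ∑ i, p i * R i ≤ ∑ i, ν i * R i}

lemma S_closed (n : ℕ) (Λ : AddSubgroup (Fin (n + 1) → ℤ)) :
    IsClosed {x : Fin (n+1) → ℝ | ∀ p ∈ Λ, ∃ i, x i ≤ (p i : ℝ)} := by
  have h : {x : Fin (n+1) → ℝ | ∀ p ∈ Λ, ∃ i, x i ≤ (p i : ℝ)}
      = ⋂ p ∈ (Λ : Set (Fin (n+1) → ℤ)),
          ⋃ i, {x : Fin (n+1) → ℝ | x i ≤ (p i : ℝ)} := by
    ext x; simp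
  rw [h]
  exact isClosed_biInter fun p _ => isClosed_iUnion_of_finite
    fun i => isClosed_le (continuous_apply i) continuous_const

lemma closure_subset_S (n : ℕ) (Λ : AddSubgroup (Fin (n + 1) → ℤ)) :
    closure (SigmaR n Λ) ⊆ {x : Fin (n+1) → ℝ | ∀ p ∈ Λ, ∃ i, x i ≤ (p i : ℝ)} := by
  apply closure_minimal _ (S_closed n Λ)
  intro x hx p hp
  have h := hx p hp
  rw [Pi.le_def] at h
  push_neg at h
  obtain ⟨i, hi⟩ := h
  exact ⟨i, hi.le⟩

lemma S_subset_closure (n : ℕ) (Λ : AddSubgroup (Fin (n + 1) → ℤ))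
    (x : Fin (n+1) → ℝ) (hx : ∀ p ∈ Λ, ∃ i, x i ≤ (p i : ℝ)) :
    x ∈ closure (SigmaR n Λ) := by
  rw [Metric.mem_closure_iff]
  intro ε hε
  refine ⟨fun i => x i - ε/2, ?_, ?_⟩
  · intro p hp hle
    obtain ⟨i, hi⟩ := hx p hp
    have := hle i
    simp only at this
    linarith
  · have h : dist x (fun i => x i - ε/2) ≤ ε/2 := by
      rw [dist_pi_le_iff (by linarith)]
      intro i
      rw [Real.dist_eq]
      have : x i - (x i - ε/2) = ε/2 := by ring
      rw [this, abs_of_nonneg (by linarith)]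
    calc dist x (fun i => x i - ε/2) ≤ ε/2 := h
      _ < ε := by linarith

/-- ν is an extreme divisor of Σ(Λ) iff ν + 1⃗ is an extreme
point of the closure of Σ_ℝ(Λ). -/
theorem stmt_8 (n : ℕ) (R : Fin (n + 1) → ℤ) (hR : ∀ i, 0 < R i)
    (Λ : AddSubgroup (Fin (n + 1) → ℤ))
    (hΛR : ∀ p ∈ Λ, ∑ i, p i * R i = 0)
    (hfull : ∀ x : Fin (n + 1) → ℤ, (∑ i, x i * R i = 0) →
      ∃ k : ℤ, k ≠ 0 ∧ k • x ∈ Λ)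
    (ν : Fin (n + 1) → ℤ) :
    ν ∈ ExtSigma n R Λ ↔
      (fun i => (ν i : ℝ) + 1) ∈ ExtClosure n R Λ := by
  constructor
  · rintro ⟨hν, hmax⟩
    -- For each j, ν + e_j is not in SigmaSet, so there is p ∈ Λ with p ≤ ν + e_j.
    have hnot : ∀ j, ∃ p ∈ Λ, ∀ i, p i ≤ ν i + (if i = j then 1 else 0) := by
      intro j
      by_contra hcon
      push_neg at hcon
      have hmem : (fun i => ν i + if i = j then 1 else 0) ∈ SigmaSet n Λ := by
        intro p hp hle
        obtain ⟨i, hi⟩ := hcon p hp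
        exact absurd (hle i) (not_le.mpr hi)
      have hsum : (∑ i, |(fun i => ν i + if i = j then 1 else 0) i - ν i|) ≤ 1 := by
        simp [apply_ite (abs : ℤ → ℤ), Finset.sum_ite_eq']
      have hdeg := hmax _ hmem hsum
      have : (∑ i, (ν i + if i = j then 1 else 0) * R i)
          = (∑ i, ν i * R i) + R j := by
        simp [add_mul, Finset.sum_add_distrib, ite_mul, Finset.sum_ite_eq']
      rw [this] at hdeg
      have := hR j
      omega
    constructor
    · -- membership in closure
      apply S_subset_closure
      intro p hp
      have h := hν p hp
      rw [Pi.le_def] at h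
      push_neg at h
      obtain ⟨i, hi⟩ := h
      exact ⟨i, by exact_mod_cast hi⟩
    · -- local maximality with δ = 1/2
      refine ⟨1/2, by norm_num, ?_⟩
      intro x hxcl hdist
      have hxS := closure_subset_S n Λ hxcl
      have hxle : ∀ j, x j ≤ (ν j : ℝ) + 1 := by
        intro j
        obtain ⟨p, hp, hpj⟩ := hnot j
        obtain ⟨i, hi⟩ := hxS p hp
        have hcoord : |x i - ((ν i : ℝ) + 1)| ≤ 1/2 := by
          have := dist_le_pi_dist x (fun i => (ν i : ℝ) + 1) i
          rw [Real.dist_eq] at this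
          linarith
        by_cases hij : i = j
        · subst hij
          have : (p i : ℝ) ≤ (ν i : ℝ) + 1 := by
            have := hpj i
            simp at this
            exact_mod_cast this
          linarith
        · exfalso
          have h1 : p i ≤ ν i := by
            have := hpj i
            simp [hij] at this
            exact this
          have h2 : (p i : ℝ) ≤ (ν i : ℝ) := by exact_mod_cast h1
          have h3 : x i ≥ (ν i : ℝ) + 1/2 := by
            rw [abs_le] at hcoord
            linarith
          linarith
      apply Finset.sum_le_sum
      intro i _
      have : (0:ℝ) ≤ (R i : ℝ) := by exact_mod_cast (hR i).le
      exact mul_le_mul_of_nonneg_left (hxle i) this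
  · rintro ⟨hcl, δ, hδ, hmax⟩
    have hnuSig : ν ∈ SigmaSet n Λ := by
      intro p hp hle
      obtain ⟨i, hi⟩ := closure_subset_S n Λ hcl p hp
      simp only at hi
      have : (ν i : ℝ) < (p i : ℝ) := by linarith
      have : ν i < p i := by exact_mod_cast this
      exact absurd (hle i) (not_le.mpr this)
    refine ⟨hnuSig, ?_⟩
    intro q hq hdist
    by_cases hle : q ≤ ν
    · exact Finset.sum_le_sum fun i _ => mul_le_mul_of_nonneg_right (hle i) (hR i).le
    · exfalso
      rw [Pi.le_def] at hle
      push_neg at hle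
      obtain ⟨j, hj⟩ := hle
      -- q = ν + e_j
      have habs : 1 ≤ |q j - ν j| := by
        rw [le_abs]; left; omega
      have hsingle : |q j - ν j| ≤ ∑ i, |q i - ν i| :=
        Finset.single_le_sum (f := fun i => |q i - ν i|) (fun i _ => abs_nonneg _)
          (Finset.mem_univ j)
      have hqj : q j = ν j + 1 := by
        have := abs_le.mp (le_trans hsingle hdist)
        omega
      have hrest : ∀ i, i ≠ j → q i = ν i := by
        intro i hij
        have herase : (∑ k ∈ Finset.univ.erase j, |q k - ν k|) + |q j - ν j|
            = ∑ k, |q k - ν k| := Finset.sum_erase_add _ _ (Finset.mem_univ j)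
        have h0 : (∑ k ∈ Finset.univ.erase j, |q k - ν k|) ≤ 0 := by omega
        have h1 : |q i - ν i| ≤ 0 := by
          refine le_trans (Finset.single_le_sum (f := fun k => |q k - ν k|)
            (fun k _ => abs_nonneg _) ?_) h0
          exact Finset.mem_erase.mpr ⟨hij, Finset.mem_univ i⟩
        have := abs_nonneg (q i - ν i)
        have : |q i - ν i| = 0 := le_antisymm h1 this
        rw [abs_eq_zero] at this
        omega
      set t : ℝ := min δ 1 with ht
      have ht0 : 0 < t := lt_min hδ one_pos
      have ht1 : t ≤ 1 := min_le_right δ 1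
      set x : Fin (n+1) → ℝ := fun i => (ν i : ℝ) + 1 + if i = j then t else 0 with hx
      have hxcl : x ∈ closure (SigmaR n Λ) := by
        apply S_subset_closure
        intro p hp
        have h := hq p hp
        rw [Pi.le_def] at h
        push_neg at h
        obtain ⟨i, hi⟩ := h
        refine ⟨i, ?_⟩
        by_cases hij : i = j
        · subst hij
          rw [hqj] at hi
          have hpi2 : ν i + 2 ≤ p i := by omega
          have hpi : (ν i : ℝ) + 2 ≤ (p i : ℝ) := by exact_mod_cast hpi2
          have h2 : x i = (ν i : ℝ) + 1 + t := by simp [hx]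
          rw [h2]
          linarith
        · rw [hrest i hij] at hi
          have hpi2 : ν i + 1 ≤ p i := by omega
          have hpi : (ν i : ℝ) + 1 ≤ (p i : ℝ) := by exact_mod_cast hpi2
          have h2 : x i = (ν i : ℝ) + 1 := by simp [hx, hij]
          rw [h2]
          linarith
      have hdx : dist x (fun i => (ν i : ℝ) + 1) ≤ δ := by
        rw [dist_pi_le_iff hδ.le]
        intro i
        rw [Real.dist_eq]
        by_cases hij : i = j
        · subst hij
          have h2 : x i = (ν i : ℝ) + 1 + t := by simp [hx]
          rw [h2]
          have h3 : (ν i : ℝ) + 1 + t - ((ν i : ℝ) + 1) = t := by ring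
          rw [h3, abs_of_nonneg ht0.le]
          exact min_le_left δ 1
        · have h2 : x i = (ν i : ℝ) + 1 := by simp [hx, hij]
          rw [h2]
          have h3 : (ν i : ℝ) + 1 - ((ν i : ℝ) + 1) = 0 := by ring
          rw [h3, abs_zero]
          exact hδ.le
      have hmx := hmax x hxcl hdx
      have hcomp : (∑ i, (R i : ℝ) * x i)
          = (∑ i, (R i : ℝ) * ((ν i : ℝ) + 1)) + (R j : ℝ) * t := by
        simp only [hx, mul_add, Finset.sum_add_distrib, mul_ite, mul_zero,
          Finset.sum_ite_eq']
        simp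
      rw [hcomp] at hmx
      have hRj : (0:ℝ) < (R j : ℝ) := by exact_mod_cast hR j
      nlinarith
end

section
/- Let R ∈ N^{n+1} be positive and Λ ⊆ Λ_R a rank-n sublattice. There exists a constant C (depending only on Λ and R) such that deg_R(p) ≤ C for all p ∈ Σ(Λ); moreover every p ∈ Σ(Λ) is dominated coordinatewise by some extreme divisor ν ∈ Ext(Σ(Λ)). -/
/-- degrees on Σ(Λ) are bounded above by a constant, and every
point of Σ(Λ) is dominated coordinatewise by an extreme divisor. -/
theorem stmt_9 (n : ℕ) (R : Fin (n + 1) → ℤ) (hR : ∀ i, 0 < R i)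
    (Λ : AddSubgroup (Fin (n + 1) → ℤ))
    (hΛR : ∀ p ∈ Λ, ∑ i, p i * R i = 0)
    (hfull : ∀ x : Fin (n + 1) → ℤ, (∑ i, x i * R i = 0) →
      ∃ k : ℤ, k ≠ 0 ∧ k • x ∈ Λ) :
    (∃ C : ℤ, ∀ p ∈ SigmaSet n Λ, ∑ i, p i * R i ≤ C) ∧
      ∀ p ∈ SigmaSet n Λ, ∃ ν ∈ ExtSigma n R Λ, p ≤ ν := by
  classical
  -- generators w i = R 0 • e_i - R i • e_0
  set w : Fin (n + 1) → (Fin (n + 1) → ℤ) :=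
    fun i j => (if j = i then R 0 else 0) - (if j = 0 then R i else 0) with hw
  have hdegw : ∀ i, ∑ j, w i j * R j = 0 := by
    intro i
    simp only [hw, sub_mul, Finset.sum_sub_distrib]
    rw [Finset.sum_eq_single i (fun b _ hb => by simp [hb]) (by simp),
        Finset.sum_eq_single (0 : Fin (n + 1)) (fun b _ hb => by simp [hb]) (by simp)]
    simp [mul_comm]
  have hK : ∀ i, ∃ K : ℤ, 0 < K ∧ K • w i ∈ Λ := by
    intro i
    obtain ⟨k, hk0, hkΛ⟩ := hfull (w i) (hdegw i)
    rcases lt_or_gt_of_ne hk0 with h | h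
    · refine ⟨-k, by omega, ?_⟩
      have := Λ.neg_mem hkΛ
      simpa [neg_smul] using this
    · exact ⟨k, h, hkΛ⟩
  choose K hKpos hKΛ using hK
  set C : ℤ := R 0 * ∑ i ∈ Finset.univ.erase 0, K i * R i with hC
  have hbound : ∀ D ∈ SigmaSet n Λ, ∑ i, D i * R i ≤ C := by
    intro D hD
    by_contra hgt
    push_neg at hgt
    set a : Fin (n + 1) → ℤ := fun i => D i / (K i * R 0) with ha
    set p : Fin (n + 1) → ℤ := ∑ i ∈ Finset.univ.erase 0, (a i * K i) • w i with hp
    have hpΛ : p ∈ Λ := by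
      refine AddSubgroup.sum_mem _ (fun i _ => ?_)
      rw [← smul_smul]
      exact AddSubgroup.zsmul_mem Λ (hKΛ i) (a i)
    have hKR0 : ∀ i, 0 < K i * R 0 := fun i => mul_pos (hKpos i) (hR 0)
    -- components of p
    have hpj : ∀ j : Fin (n + 1), j ≠ 0 → p j = a j * K j * (R 0) := by
      intro j hj
      rw [hp, Finset.sum_apply]
      rw [Finset.sum_eq_single j]
      · simp [hw, hj, mul_assoc]
      · intro i _ hij
        simp [hw, hj, Ne.symm hij]
      · intro h
        exact absurd (Finset.mem_erase.mpr ⟨hj, Finset.mem_univ j⟩) h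
    have hp0 : p 0 = -∑ i ∈ Finset.univ.erase 0, a i * K i * R i := by
      rw [hp, Finset.sum_apply, ← Finset.sum_neg_distrib]
      refine Finset.sum_congr rfl (fun i hi => ?_)
      have hi0 : (0 : Fin (n + 1)) ≠ i := Ne.symm (Finset.mem_erase.mp hi).1
      simp [hw, hi0, mul_comm]
    -- p ≤ D
    have hle : p ≤ D := by
      intro j
      by_cases hj : j = 0
      · subst hj
        rw [hp0]
        have key : ∀ i ∈ Finset.univ.erase (0 : Fin (n + 1)),
            (D i - K i * R 0) * R i ≤ a i * K i * R i * R 0 := by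
          intro i _
          have h2 : D i < (a i + 1) * (K i * R 0) := Int.lt_ediv_add_one_mul_self (D i) (hKR0 i)
          have h3 : D i - K i * R 0 + 1 ≤ a i * (K i * R 0) := by nlinarith
          have h4 : D i - K i * R 0 ≤ a i * (K i * R 0) := by omega
          calc (D i - K i * R 0) * R i ≤ a i * (K i * R 0) * R i :=
                mul_le_mul_of_nonneg_right h4 (le_of_lt (hR i))
            _ = a i * K i * R i * R 0 := by ring
        have hsplit : ∑ i, D i * R i
            = D 0 * R 0 + ∑ i ∈ Finset.univ.erase 0, D i * R i := by
          rw [← Finset.add_sum_erase _ _ (Finset.mem_univ 0)]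
        have hR0 : (0 : ℤ) < R 0 := hR 0
        have hmul : (-∑ i ∈ Finset.univ.erase 0, a i * K i * R i) * R 0 < D 0 * R 0 := by
          have e1 : ∑ i ∈ Finset.univ.erase (0 : Fin (n + 1)), a i * K i * R i * R 0
              = (∑ i ∈ Finset.univ.erase 0, a i * K i * R i) * R 0 := by
            rw [Finset.sum_mul]
          have e2 : ∑ i ∈ Finset.univ.erase (0 : Fin (n + 1)), (D i * R i - K i * R 0 * R i)
              = ∑ i ∈ Finset.univ.erase 0, (D i - K i * R 0) * R i := by
            refine Finset.sum_congr rfl (fun i _ => by ring)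
          have e3 : ∑ i ∈ Finset.univ.erase (0 : Fin (n + 1)), K i * R 0 * R i
              = C := by
            rw [hC, Finset.mul_sum]
            exact Finset.sum_congr rfl (fun i _ => by ring)
          have hsum' : ∑ i ∈ Finset.univ.erase (0 : Fin (n + 1)), D i * R i - C
              ≤ (∑ i ∈ Finset.univ.erase 0, a i * K i * R i) * R 0 := by
            rw [← e1, ← e3]
            calc ∑ i ∈ Finset.univ.erase (0 : Fin (n + 1)), D i * R i
                  - ∑ i ∈ Finset.univ.erase (0 : Fin (n + 1)), K i * R 0 * R i
                = ∑ i ∈ Finset.univ.erase (0 : Fin (n + 1)), (D i * R i - K i * R 0 * R i) := by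
                  rw [Finset.sum_sub_distrib]
              _ = ∑ i ∈ Finset.univ.erase 0, (D i - K i * R 0) * R i := e2
              _ ≤ _ := Finset.sum_le_sum key
          have hD0 : D 0 * R 0 = (∑ i, D i * R i) - ∑ i ∈ Finset.univ.erase 0, D i * R i := by
            omega
          have : C < ∑ i, D i * R i := hgt
          have hneg : (-∑ i ∈ Finset.univ.erase 0, a i * K i * R i) * R 0
              = -((∑ i ∈ Finset.univ.erase 0, a i * K i * R i) * R 0) := by ring
          omega
        exact le_of_lt (lt_of_mul_lt_mul_right hmul (le_of_lt hR0))
      · rw [hpj j hj]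
        have := Int.ediv_mul_le (D j) (ne_of_gt (hKR0 j))
        calc a j * K j * R 0 = D j / (K j * R 0) * (K j * R 0) := by rw [ha]; ring
          _ ≤ D j := this
    exact hD p hpΛ hle
  refine ⟨⟨C, hbound⟩, ?_⟩
  intro p hp
  set P : ℤ → Prop := fun d => ∃ D ∈ SigmaSet n Λ, p ≤ D ∧ ∑ i, D i * R i = d with hP
  obtain ⟨d, ⟨ν, hν, hpν, hd⟩, hmax⟩ :=
    Int.exists_greatest_of_bdd (P := P)
      ⟨C, fun z hz => by obtain ⟨D, hD, _, hdeg⟩ := hz; exact hdeg ▸ hbound D hD⟩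
      ⟨∑ i, p i * R i, p, hp, le_refl p, rfl⟩
  refine ⟨ν, ⟨hν, ?_⟩, hpν⟩
  intro q hq hdist
  by_contra hlt
  push_neg at hlt
  -- show ν ≤ q
  have hνq : ν ≤ q := by
    intro j
    by_contra hj
    push_neg at hj
    have hj' : q j < ν j := by simpa using hj
    -- q j < ν j
    have habsj : |q j - ν j| = ν j - q j := by
      rw [abs_of_neg (by omega : q j - ν j < 0)]; ring
    have h1 : (1 : ℤ) ≤ |q j - ν j| := by omega
    have hsplit : ∑ i, |q i - ν i|
        = |q j - ν j| + ∑ i ∈ Finset.univ.erase j, |q i - ν i| := by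
      rw [← Finset.add_sum_erase _ _ (Finset.mem_univ j)]
    have hrest : ∑ i ∈ Finset.univ.erase j, |q i - ν i| ≤ 0 := by omega
    have hrestnn : (0 : ℤ) ≤ ∑ i ∈ Finset.univ.erase j, |q i - ν i| :=
      Finset.sum_nonneg (fun i _ => abs_nonneg _)
    have hsum0 : ∑ i ∈ Finset.univ.erase j, |q i - ν i| = 0 := le_antisymm hrest hrestnn
    have hrest0 : ∀ i ∈ Finset.univ.erase j, |q i - ν i| = 0 :=
      (Finset.sum_eq_zero_iff_of_nonneg (fun i _ => abs_nonneg _)).mp hsum0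
    have heq : ∀ i, i ≠ j → q i = ν i := by
      intro i hij
      have := hrest0 i (Finset.mem_erase.mpr ⟨hij, Finset.mem_univ i⟩)
      have := abs_eq_zero.mp this
      omega
    have hqj : q j = ν j - 1 := by omega
    -- deg q = deg ν - R j < deg ν
    have hdeg : ∑ i, q i * R i - ∑ i, ν i * R i = -R j := by
      rw [← Finset.sum_sub_distrib]
      rw [Finset.sum_eq_single j]
      · rw [hqj]; ring
      · intro i _ hij
        rw [heq i hij]; ring
      · intro h; exact absurd (Finset.mem_univ j) h
    have := hR j
    omega
  have hpq : p ≤ q := le_trans hpν hνq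
  have := hmax (∑ i, q i * R i) ⟨q, hq, hpq, rfl⟩
  omega
end

section
/- A finite directed multigraph G⃗ with Laplacian Q⃗ = D⃗ − A⃗ (where D⃗ = diag(deg⁺(v_0),…,deg⁺(v_n)) and A⃗ is the adjacency matrix) is strongly connected if and only if there exists a vector R ∈ N^{n+1} with all positive entries, unique up to scaling, such that Q⃗ᵀ R = 0. -/
/-- The out-degree of vertex i in the directed multigraph with adjacency
matrix A (A i j = number of edges from i to j). -/
def outdeg (n : ℕ) (A : Fin (n + 1) → Fin (n + 1) → ℕ) (i : Fin (n + 1)) : ℤ :=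
  ∑ j, (A i j : ℤ)

/-- The Laplacian Q = D − A of the directed multigraph. -/
def lap (n : ℕ) (A : Fin (n + 1) → Fin (n + 1) → ℕ)
    (i j : Fin (n + 1)) : ℤ :=
  (if i = j then outdeg n A i else 0) - (A i j : ℤ)

/-- Strong connectivity: every vertex reaches every other by a directed path. -/
def StronglyConnected (n : ℕ) (A : Fin (n + 1) → Fin (n + 1) → ℕ) : Prop :=
  ∀ i j : Fin (n + 1), Relation.ReflTransGen (fun a b => 0 < A a b) i j

section Aux

open Matrix

variable {n : ℕ} {A : Fin (n + 1) → Fin (n + 1) → ℕ}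

lemma lap_row_sum (i : Fin (n + 1)) : ∑ j, lap n A i j = 0 := by
  simp [lap, Finset.sum_sub_distrib, Finset.sum_ite_eq, outdeg]

lemma sum_lap_mem (S : Finset (Fin (n + 1))) {j : Fin (n + 1)} (hj : j ∈ S) :
    ∑ i ∈ S, lap n A j i = ∑ i ∈ Sᶜ, (A j i : ℤ) := by
  have h : ∑ i ∈ Sᶜ, (A j i : ℤ) + ∑ i ∈ S, (A j i : ℤ) = ∑ i, (A j i : ℤ) :=
    Finset.sum_compl_add_sum S _
  simp only [lap, Finset.sum_sub_distrib, Finset.sum_ite_eq, hj, if_true]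
  rw [outdeg, ← h]
  ring

lemma sum_lap_not_mem (S : Finset (Fin (n + 1))) {j : Fin (n + 1)} (hj : j ∉ S) :
    ∑ i ∈ S, lap n A j i = -∑ i ∈ S, (A j i : ℤ) := by
  simp only [lap, Finset.sum_sub_distrib, Finset.sum_ite_eq, hj, if_false]
  ring

/-- Sign propagation: in a strongly connected graph, a vector in the left kernel
of the Laplacian which is positive somewhere is positive everywhere. -/
lemma kern_pos {K : Type*} [CommRing K] [LinearOrder K] [IsStrictOrderedRing K]
    (hsc : StronglyConnected n A) (x : Fin (n + 1) → K)
    (hx : ∀ i, ∑ j, ((lap n A j i : ℤ) : K) * x j = 0)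
    {i₀ : Fin (n + 1)} (h₀ : 0 < x i₀) : ∀ i, 0 < x i := by
  classical
  set S : Finset (Fin (n + 1)) := Finset.univ.filter (fun i => 0 < x i) with hS
  have hmemS : ∀ i, i ∈ S ↔ 0 < x i := by intro i; simp [hS]
  set e : Fin (n + 1) → ℤ := fun j => ∑ i ∈ S, lap n A j i with he
  have hsum0 : ∑ j, x j * ((e j : ℤ) : K) = 0 := by
    have h1 : ∀ j, x j * ((e j : ℤ) : K) = ∑ i ∈ S, ((lap n A j i : ℤ) : K) * x j := by
      intro j
      simp only [he, Int.cast_sum, Finset.mul_sum]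
      exact Finset.sum_congr rfl fun i _ => mul_comm _ _
    calc ∑ j, x j * ((e j : ℤ) : K)
        = ∑ j, ∑ i ∈ S, ((lap n A j i : ℤ) : K) * x j := by
          exact Finset.sum_congr rfl fun j _ => h1 j
      _ = ∑ i ∈ S, ∑ j, ((lap n A j i : ℤ) : K) * x j := Finset.sum_comm
      _ = 0 := Finset.sum_eq_zero fun i _ => hx i
  have hnn : ∀ j ∈ Finset.univ, (0:K) ≤ x j * ((e j : ℤ) : K) := by
    intro j _
    by_cases hj : j ∈ S
    · have h1 : 0 < x j := (hmemS j).1 hj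
      have h2 : (0:ℤ) ≤ e j := by
        rw [he]; simp only
        rw [sum_lap_mem S hj]
        positivity
      have h3 : (0:K) ≤ ((e j : ℤ) : K) := by exact_mod_cast h2
      exact mul_nonneg h1.le h3
    · have h1 : x j ≤ 0 := le_of_not_gt (fun h => hj ((hmemS j).2 h))
      have h2 : e j ≤ 0 := by
        rw [he]; simp only
        rw [sum_lap_not_mem S hj]
        simp only [neg_nonpos]
        positivity
      have h3 : ((e j : ℤ) : K) ≤ 0 := by exact_mod_cast h2
      have := mul_nonneg (neg_nonneg.2 h1) (neg_nonneg.2 h3)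
      simpa using this
  have hzero : ∀ j ∈ Finset.univ, x j * ((e j : ℤ) : K) = 0 :=
    (Finset.sum_eq_zero_iff_of_nonneg hnn).1 hsum0
  have hclosed : ∀ a ∈ S, ∀ b, 0 < A a b → b ∈ S := by
    intro a ha b hab
    by_contra hb
    have hxa : 0 < x a := (hmemS a).1 ha
    have h0 : x a * ((e a : ℤ) : K) = 0 := hzero a (Finset.mem_univ a)
    have hea : ((e a : ℤ) : K) = 0 := by
      rcases mul_eq_zero.1 h0 with h | h
      · exact absurd h hxa.ne'
      · exact h
    have hea' : e a = 0 := by exact_mod_cast hea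
    rw [he] at hea'; simp only at hea'
    rw [sum_lap_mem S ha] at hea'
    have hAab : (A a b : ℤ) = 0 := by
      have hb' : b ∈ Sᶜ := Finset.mem_compl.2 hb
      have := (Finset.sum_eq_zero_iff_of_nonneg
        (fun i _ => Int.natCast_nonneg (A a i))).1 hea' b hb'
      exact this
    omega
  intro i
  have h := hsc i₀ i
  have hi : i ∈ S := by
    induction h with
    | refl => exact (hmemS i₀).2 h₀
    | tail _ hab ih => exact hclosed _ ih _ hab
  exact (hmemS i).1 hi

/-- Existence of a nonzero integer vector in the left kernel of the Laplacian. -/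
lemma exists_kernel_vec :
    ∃ x : Fin (n + 1) → ℤ, x ≠ 0 ∧ ∀ i, ∑ j, lap n A j i * x j = 0 := by
  classical
  set M : Matrix (Fin (n + 1)) (Fin (n + 1)) ℤ := Matrix.of (lap n A) with hM
  have hones : M *ᵥ (fun _ => (1:ℤ)) = 0 := by
    funext i
    simp only [Matrix.mulVec, dotProduct, hM, Matrix.of_apply, mul_one]
    exact lap_row_sum i
  have hdet : M.det = 0 := by
    apply Matrix.exists_mulVec_eq_zero_iff.1
    refine ⟨fun _ => 1, ?_, hones⟩
    intro h
    have := congrFun h 0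
    simp at this
  have hdetT : Mᵀ.det = 0 := by rw [Matrix.det_transpose]; exact hdet
  obtain ⟨x, hx0, hxker⟩ := Matrix.exists_mulVec_eq_zero_iff.2 hdetT
  refine ⟨x, hx0, fun i => ?_⟩
  have := congrFun hxker i
  simpa [Matrix.mulVec, dotProduct, hM, Matrix.transpose] using this

end Aux

/-- a directed multigraph is strongly connected iff there is a
positive integer vector R, unique up to multiplication by a real constant,
with QᵀR = 0. -/
theorem stmt_16 (n : ℕ) (A : Fin (n + 1) → Fin (n + 1) → ℕ)
    (hloop : ∀ i, A i i = 0) :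
    StronglyConnected n A ↔
      ∃ R : Fin (n + 1) → ℤ, (∀ i, 0 < R i) ∧
        (∀ i, ∑ j, lap n A j i * R j = 0) ∧
        ∀ R' : Fin (n + 1) → ℝ, (∀ i, ∑ j, (lap n A j i : ℝ) * R' j = 0) →
          ∃ c : ℝ, ∀ i, R' i = c * (R i : ℝ) := by
  classical
  constructor
  · intro hsc
    obtain ⟨x, hx0, hxker⟩ := exists_kernel_vec (n := n) (A := A)
    -- Find a nonzero coordinate and normalize the sign.
    obtain ⟨i₀, hi₀⟩ : ∃ i, x i ≠ 0 := by
      by_contra h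
      push_neg at h
      exact hx0 (funext fun i => h i)
    have hxkerK : ∀ i, ∑ j, ((lap n A j i : ℤ) : ℤ) * x j = 0 := by
      simpa using hxker
    obtain ⟨R, hRpos, hRker⟩ :
        ∃ R : Fin (n + 1) → ℤ, (∀ i, 0 < R i) ∧ ∀ i, ∑ j, lap n A j i * R j = 0 := by
      rcases lt_or_gt_of_ne hi₀ with hneg | hpos
      · refine ⟨-x, ?_, ?_⟩
        · have hnegker : ∀ i, ∑ j, ((lap n A j i : ℤ) : ℤ) * (-x) j = 0 := by
            intro i
            simp only [Pi.neg_apply, mul_neg, Finset.sum_neg_distrib]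
            rw [neg_eq_zero]
            exact hxkerK i
          exact kern_pos hsc (-x) hnegker (i₀ := i₀) (by simpa using hneg)
        · intro i
          simp only [Pi.neg_apply, mul_neg, Finset.sum_neg_distrib, neg_eq_zero]
          exact hxker i
      · exact ⟨x, kern_pos hsc x hxkerK hpos, hxker⟩
    refine ⟨R, hRpos, hRker, ?_⟩
    intro R' hR'
    have hRkerR : ∀ i, ∑ j, (lap n A j i : ℝ) * (R j : ℝ) = 0 := by
      intro i
      have h := hRker i
      have h2 : ((∑ j, lap n A j i * R j : ℤ) : ℝ) = 0 := by exact_mod_cast h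
      push_cast at h2
      exact h2
    refine ⟨R' 0 / (R 0 : ℝ), ?_⟩
    set c : ℝ := R' 0 / (R 0 : ℝ) with hc
    set y : Fin (n + 1) → ℝ := fun i => R' i - c * (R i : ℝ) with hy
    have hyker : ∀ i, ∑ j, ((lap n A j i : ℤ) : ℝ) * y j = 0 := by
      intro i
      simp only [hy, mul_sub, Finset.sum_sub_distrib]
      have h1 := hR' i
      have h2 := hRkerR i
      have : ∑ j, (lap n A j i : ℝ) * (c * (R j : ℝ))
          = c * ∑ j, (lap n A j i : ℝ) * (R j : ℝ) := by
        rw [Finset.mul_sum]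
        exact Finset.sum_congr rfl fun j _ => by ring
      rw [this, h1, h2]
      ring
    have hy0 : y 0 = 0 := by
      have hR0 : (R 0 : ℝ) ≠ 0 := by
        exact_mod_cast (hRpos 0).ne'
      simp only [hy, hc]
      field_simp
      ring
    have hyall : ∀ i, y i = 0 := by
      intro i
      by_contra hne
      rcases lt_or_gt_of_ne hne with hneg | hpos
      · have hnegker : ∀ k, ∑ j, ((lap n A j k : ℤ) : ℝ) * (-y) j = 0 := by
          intro k
          simp only [Pi.neg_apply, mul_neg, Finset.sum_neg_distrib, neg_eq_zero]
          exact hyker k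
        have := kern_pos hsc (-y) hnegker (i₀ := i) (by simpa using hneg) 0
        simp [hy0] at this
      · have := kern_pos hsc y hyker (i₀ := i) hpos 0
        simp [hy0] at this
    intro i
    have := hyall i
    simp only [hy] at this
    linarith
  · rintro ⟨R, hRpos, hRker, huniq⟩
    intro i j
    set S : Finset (Fin (n + 1)) :=
      Finset.univ.filter (fun k => Relation.ReflTransGen (fun a b => 0 < A a b) i k) with hSdef
    have hmem : ∀ k, k ∈ S ↔ Relation.ReflTransGen (fun a b => 0 < A a b) i k := by
      intro k; simp [hSdef]
    have hiS : i ∈ S := (hmem i).2 Relation.ReflTransGen.refl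
    have hclosed : ∀ a ∈ S, ∀ b, 0 < A a b → b ∈ S := by
      intro a ha b hab
      exact (hmem b).2 (((hmem a).1 ha).tail hab)
    have hout : ∀ a ∈ S, ∀ b, b ∉ S → A a b = 0 := by
      intro a ha b hb
      by_contra h
      exact hb (hclosed a ha b (Nat.pos_of_ne_zero h))
    -- no incoming edges into S either
    have hswap : ∑ j', (∑ k ∈ S, lap n A j' k) * R j' = 0 := by
      have hsum : ∑ k ∈ S, ∑ j', lap n A j' k * R j' = 0 :=
        Finset.sum_eq_zero fun k _ => hRker k
      calc ∑ j', (∑ k ∈ S, lap n A j' k) * R j'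
          = ∑ j', ∑ k ∈ S, lap n A j' k * R j' := by
            exact Finset.sum_congr rfl fun j' _ => Finset.sum_mul _ _ _
        _ = ∑ k ∈ S, ∑ j', lap n A j' k * R j' := Finset.sum_comm
        _ = 0 := hsum
    have hS0 : ∀ j' ∈ S, (∑ k ∈ S, lap n A j' k) * R j' = 0 := by
      intro j' hj'
      rw [sum_lap_mem S hj']
      have : ∑ k ∈ Sᶜ, (A j' k : ℤ) = 0 :=
        Finset.sum_eq_zero fun k hk => by
          rw [hout j' hj' k (Finset.mem_compl.1 hk)]; simp
      rw [this, zero_mul]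
    have hcompl : ∑ j' ∈ Sᶜ, (∑ k ∈ S, lap n A j' k) * R j' = 0 := by
      have h := Finset.sum_compl_add_sum S (fun j' => (∑ k ∈ S, lap n A j' k) * R j')
      rw [hswap] at h
      have h2 : ∑ j' ∈ S, (∑ k ∈ S, lap n A j' k) * R j' = 0 :=
        Finset.sum_eq_zero hS0
      linarith
    have hin : ∀ a, a ∉ S → ∀ b ∈ S, A a b = 0 := by
      intro a ha b hb
      have hnn : ∀ j' ∈ Sᶜ, (0:ℤ) ≤ (∑ k ∈ S, (A j' k : ℤ)) * R j' :=
        fun j' _ => mul_nonneg (by positivity) (hRpos j').le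
      have hneg : ∑ j' ∈ Sᶜ, (∑ k ∈ S, (A j' k : ℤ)) * R j' = 0 := by
        have : ∀ j' ∈ Sᶜ, (∑ k ∈ S, lap n A j' k) * R j'
            = -((∑ k ∈ S, (A j' k : ℤ)) * R j') := by
          intro j' hj'
          rw [sum_lap_not_mem S (Finset.mem_compl.1 hj')]
          ring
        rw [Finset.sum_congr rfl this, Finset.sum_neg_distrib, neg_eq_zero] at hcompl
        exact hcompl
      have ha' : a ∈ Sᶜ := Finset.mem_compl.2 ha
      have hterm : (∑ k ∈ S, (A a k : ℤ)) * R a = 0 :=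
        (Finset.sum_eq_zero_iff_of_nonneg hnn).1 hneg a ha'
      have hsum0 : ∑ k ∈ S, (A a k : ℤ) = 0 := by
        rcases mul_eq_zero.1 hterm with h | h
        · exact h
        · exact absurd h (hRpos a).ne'
      have : (A a b : ℤ) = 0 :=
        (Finset.sum_eq_zero_iff_of_nonneg (fun k _ => Int.natCast_nonneg _)).1 hsum0 b hb
      exact_mod_cast this
    -- build the truncated vector
    set R' : Fin (n + 1) → ℝ := fun k => if k ∈ S then (R k : ℝ) else 0 with hR'def
    have hker' : ∀ i', ∑ j', (lap n A j' i' : ℝ) * R' j' = 0 := by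
      intro i'
      have hsplit : ∑ j', (lap n A j' i' : ℝ) * R' j'
          = ((∑ j' ∈ S, lap n A j' i' * R j' : ℤ) : ℝ) := by
        push_cast
        simp only [hR'def, mul_ite, mul_zero]
        rw [Finset.sum_ite_mem, Finset.univ_inter]
      rw [hsplit]
      by_cases hi' : i' ∈ S
      · have h1 : ∑ j' ∈ S, lap n A j' i' * R j' = 0 := by
          have h := Finset.sum_compl_add_sum S (fun j' => lap n A j' i' * R j')
          rw [hRker i'] at h
          have h2 : ∑ j' ∈ Sᶜ, lap n A j' i' * R j' = 0 := by
            apply Finset.sum_eq_zero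
            intro j' hj'
            have hj'' : j' ∉ S := Finset.mem_compl.1 hj'
            have hne : j' ≠ i' := fun hEq => hj'' (hEq ▸ hi')
            have : lap n A j' i' = -(A j' i' : ℤ) := by
              simp [lap, hne]
            rw [this, hin j' hj'' i' hi']
            simp
          linarith
        rw [h1]; simp
      · have h1 : ∑ j' ∈ S, lap n A j' i' * R j' = 0 := by
          apply Finset.sum_eq_zero
          intro j' hj'
          have hne : j' ≠ i' := fun hEq => hi' (hEq ▸ hj')
          have : lap n A j' i' = -(A j' i' : ℤ) := by
            simp [lap, hne]
          rw [this, hout j' hj' i' hi']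
          simp
        rw [h1]; simp
    obtain ⟨c, hc⟩ := huniq R' hker'
    have hc1 : c = 1 := by
      have h := hc i
      simp only [hR'def, hiS, if_true] at h
      have hR0 : (R i : ℝ) ≠ 0 := by exact_mod_cast (hRpos i).ne'
      have h2 : c * (R i : ℝ) = 1 * (R i : ℝ) := by linarith
      exact mul_right_cancel₀ hR0 h2
    by_contra hj
    have hjS : j ∉ S := fun h => hj ((hmem j).1 h)
    have := hc j
    simp only [hR'def, hjS, if_false, hc1, one_mul] at this
    have hRj : (0:ℝ) < (R j : ℝ) := by exact_mod_cast hRpos j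
    linarith [this]
end

section
/- Let G⃗ be a strongly connected directed graph with Laplacian Q⃗, let R ∈ N^{n+1} be the positive vector with Q⃗ᵀR = 0 and gcd of entries 1, and fix a vertex v_0 with multiplicity r_0 = R(v_0). Then for every divisor D ∈ Z^{n+1} there exist exactly r_0 distinct v_0-reduced divisors equivalent to D modulo the lattice spanned by the rows of Q⃗. -/
namespace Stmt17Aux

variable {n : ℕ}

/-- Action of the transpose Laplacian on f. -/
def Qt (A : Fin (n + 1) → Fin (n + 1) → ℕ) (g : Fin (n + 1) → ℤ) (v : Fin (n + 1)) : ℤ :=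
  ∑ u, lap n A u v * g u

lemma Qt_expand (A : Fin (n + 1) → Fin (n + 1) → ℕ) (g : Fin (n + 1) → ℤ) (v : Fin (n + 1)) :
    Qt A g v = outdeg n A v * g v - ∑ u, (A u v : ℤ) * g u := by
  have h : ∀ u : Fin (n + 1),
      lap n A u v * g u
        = (if u = v then outdeg n A u * g u else 0) - (A u v : ℤ) * g u := by
    intro u; unfold lap; split <;> ring
  simp only [Qt, h, Finset.sum_sub_distrib, Finset.sum_ite_eq' Finset.univ v,
    Finset.mem_univ, if_true]

lemma Qt_add (A : Fin (n + 1) → Fin (n + 1) → ℕ) (g h : Fin (n + 1) → ℤ) (v : Fin (n + 1)) :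
    Qt A (fun u => g u + h u) v = Qt A g v + Qt A h v := by
  simp [Qt, mul_add, Finset.sum_add_distrib]

lemma Qt_sub (A : Fin (n + 1) → Fin (n + 1) → ℕ) (g h : Fin (n + 1) → ℤ) (v : Fin (n + 1)) :
    Qt A (fun u => g u - h u) v = Qt A g v - Qt A h v := by
  simp [Qt, mul_sub, Finset.sum_sub_distrib]

lemma Qt_const_mul (A : Fin (n + 1) → Fin (n + 1) → ℕ) (k : ℤ) (g : Fin (n + 1) → ℤ)
    (v : Fin (n + 1)) : Qt A (fun u => k * g u) v = k * Qt A g v := by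
  simp only [Qt, Finset.mul_sum]
  congr 1; ext u; ring

lemma Qt_single (A : Fin (n + 1) → Fin (n + 1) → ℕ) (k : ℤ) (v₀ v : Fin (n + 1)) :
    Qt A (fun u => if u = v₀ then k else 0) v = k * lap n A v₀ v := by
  have h : ∀ u : Fin (n + 1),
      lap n A u v * (if u = v₀ then k else 0)
        = if u = v₀ then lap n A u v * k else 0 := by
    intro u; split <;> simp
  simp only [Qt, h, Finset.sum_ite_eq' Finset.univ v₀, Finset.mem_univ, if_true]
  ring

lemma lap_row_sum (A : Fin (n + 1) → Fin (n + 1) → ℕ) (u : Fin (n + 1)) :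
    ∑ v, lap n A u v = 0 := by
  unfold lap
  rw [Finset.sum_sub_distrib]
  simp [Finset.sum_ite_eq Finset.univ u, outdeg]

lemma exchange (A : Fin (n + 1) → Fin (n + 1) → ℕ) (wv g : Fin (n + 1) → ℤ) :
    ∑ v, wv v * Qt A g v = ∑ u, g u * ∑ v, lap n A u v * wv v := by
  simp only [Qt, Finset.mul_sum]
  rw [Finset.sum_comm]
  congr 1; ext u
  congr 1; ext v
  ring

/-- Reachability within k steps. -/
def reachIn (B : Fin (n + 1) → Fin (n + 1) → ℕ) (v₀ : Fin (n + 1)) : ℕ → Fin (n + 1) → Prop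
  | 0, v => v = v₀
  | k + 1, v => v = v₀ ∨ ∃ u, 0 < B v u ∧ reachIn B v₀ k u

lemma reach_exists {B : Fin (n + 1) → Fin (n + 1) → ℕ} {v₀ : Fin (n + 1)}
    (hB : ∀ v, Relation.ReflTransGen (fun a b => 0 < B a b) v v₀) (v : Fin (n + 1)) :
    ∃ k, reachIn B v₀ k v := by
  refine Relation.ReflTransGen.head_induction_on (hB v) ⟨0, rfl⟩ ?_
  rintro a c h' _ ⟨k, hk⟩
  exact ⟨k + 1, Or.inr ⟨c, h', hk⟩⟩

noncomputable def dist {B : Fin (n + 1) → Fin (n + 1) → ℕ} {v₀ : Fin (n + 1)}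
    (hB : ∀ v, Relation.ReflTransGen (fun a b => 0 < B a b) v v₀) (v : Fin (n + 1)) : ℕ :=
  @Nat.find _ (Classical.decPred _) (reach_exists hB v)

lemma dist_v₀ {B : Fin (n + 1) → Fin (n + 1) → ℕ} {v₀ : Fin (n + 1)}
    (hB : ∀ v, Relation.ReflTransGen (fun a b => 0 < B a b) v v₀) : dist hB v₀ = 0 := by
  classical
  simp only [dist]
  rw [Nat.find_eq_zero]
  rfl

lemma dist_step {B : Fin (n + 1) → Fin (n + 1) → ℕ} {v₀ : Fin (n + 1)}
    (hB : ∀ v, Relation.ReflTransGen (fun a b => 0 < B a b) v v₀) {v : Fin (n + 1)}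
    (hv : v ≠ v₀) : ∃ u, 0 < B v u ∧ dist hB u < dist hB v := by
  classical
  have hspec : reachIn B v₀ (dist hB v) v := Nat.find_spec (reach_exists hB v)
  rcases hd : dist hB v with _ | k
  · rw [hd] at hspec; exact absurd hspec hv
  · rw [hd] at hspec
    rcases hspec with h | ⟨u, hBu, hu⟩
    · exact absurd h hv
    · refine ⟨u, hBu, ?_⟩
      have : dist hB u ≤ k := Nat.find_le hu
      omega


lemma row_expand (A : Fin (n + 1) → Fin (n + 1) → ℕ) (w : Fin (n + 1) → ℤ) (u : Fin (n + 1)) :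
    ∑ v, lap n A u v * w v = outdeg n A u * w u - ∑ v, (A u v : ℤ) * w v := by
  have h : ∀ v : Fin (n + 1),
      lap n A u v * w v
        = (if u = v then outdeg n A u * w v else 0) - (A u v : ℤ) * w v := by
    intro v; unfold lap; split <;> ring
  simp only [h, Finset.sum_sub_distrib, Finset.sum_ite_eq Finset.univ u,
    Finset.mem_univ, if_true]

/-- A potential w ≥ 1, maximized at v₀, with (Q w)(u) ≤ -w u ≤ -1 for u ≠ v₀. -/
lemma exists_w (A : Fin (n + 1) → Fin (n + 1) → ℕ) (v₀ : Fin (n + 1))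
    (hconn : StronglyConnected n A) :
    ∃ w : Fin (n + 1) → ℤ, (∀ v, 1 ≤ w v) ∧ (∀ v, w v ≤ w v₀) ∧
      (∀ u, u ≠ v₀ → (∑ v, lap n A u v * w v) ≤ -1) := by
  classical
  set K : ℕ := 1 + ∑ u, ∑ j, A u j with hK
  have hK1 : 1 ≤ K := by omega
  have hK1' : (1:ℤ) ≤ (K:ℤ) := by exact_mod_cast hK1
  have hKout : ∀ u, outdeg n A u + 1 ≤ (K : ℤ) := by
    intro u
    have h1 : ∑ j, A u j ≤ ∑ u, ∑ j, A u j :=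
      Finset.single_le_sum (f := fun u => ∑ j, A u j) (fun i _ => Nat.zero_le _)
        (Finset.mem_univ u)
    have : outdeg n A u ≤ ((∑ u, ∑ j, A u j : ℕ) : ℤ) := by
      unfold outdeg; exact_mod_cast h1
    omega
  have hB : ∀ v, Relation.ReflTransGen (fun a b => 0 < A a b) v v₀ := fun v => hconn v v₀
  set d := dist hB with hd
  set N : ℕ := Finset.univ.sup d with hN
  set w : Fin (n + 1) → ℤ := fun v => (K : ℤ) ^ (N - d v) with hw
  have hwpos : ∀ v, (1:ℤ) ≤ w v := fun v =>
    one_le_pow₀ hK1'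
  refine ⟨w, hwpos, ?_, ?_⟩
  · intro v
    have h0 : d v₀ = 0 := dist_v₀ hB
    simp only [hw, h0, Nat.sub_zero]
    exact pow_le_pow_right₀ hK1' (Nat.sub_le _ _)
  · intro u hu
    obtain ⟨u', hAu', hdu'⟩ := dist_step hB hu
    have hdN : d u ≤ N := Finset.le_sup (Finset.mem_univ u)
    rw [row_expand]
    have h2 : (K : ℤ) * w u ≤ w u' := by
      have he : (K : ℤ) * w u = (K:ℤ) ^ (N - d u + 1) := by
        rw [pow_succ]; ring
      have hdu2 : d u' < d u := hdu'
      have hexp : N - d u + 1 ≤ N - d u' := by omega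
      rw [hw, he]
      exact pow_le_pow_right₀ hK1' hexp
    have h3 : w u' ≤ ∑ v, (A u v : ℤ) * w v := by
      calc w u' ≤ (A u u' : ℤ) * w u' := by
            have : (1:ℤ) ≤ (A u u' : ℤ) := by exact_mod_cast hAu'
            nlinarith [hwpos u']
        _ ≤ ∑ v, (A u v : ℤ) * w v :=
            Finset.single_le_sum (f := fun v => (A u v : ℤ) * w v)
              (fun v _ => mul_nonneg (by positivity) (by linarith [hwpos v]))
              (Finset.mem_univ u')
    have h4 : outdeg n A u * w u - ∑ v, (A u v : ℤ) * w v ≤ -(w u) := by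
      have := hKout u
      nlinarith [hwpos u]
    linarith [hwpos u]
end Stmt17Aux

namespace Stmt17Aux
variable {n : ℕ}

/-- f gives a divisor effective away from v₀. -/
def Sf (A : Fin (n + 1) → Fin (n + 1) → ℕ) (v₀ : Fin (n + 1)) (D : Fin (n + 1) → ℤ)
    (f : Fin (n + 1) → ℤ) : Prop :=
  ∀ v, v ≠ v₀ → 0 ≤ D v - Qt A f v

/-- Box-maximal element of S with value c at v₀. -/
def IsBM (A : Fin (n + 1) → Fin (n + 1) → ℕ) (R : Fin (n + 1) → ℤ) (v₀ : Fin (n + 1))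
    (D : Fin (n + 1) → ℤ) (c : ℤ) (f : Fin (n + 1) → ℤ) : Prop :=
  f v₀ = c ∧ Sf A v₀ D f ∧
    ∀ g : Fin (n + 1) → ℤ, g ≠ 0 → g v₀ = 0 → (∀ v, 0 ≤ g v) → (∀ v, g v ≤ R v) →
      ¬ Sf A v₀ D (fun v => f v + g v)

lemma sup_closed {A : Fin (n + 1) → Fin (n + 1) → ℕ} {v₀ : Fin (n + 1)}
    {D f h : Fin (n + 1) → ℤ} (hf : Sf A v₀ D f) (hh : Sf A v₀ D h) :
    Sf A v₀ D (fun v => max (f v) (h v)) := by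
  intro v hv
  rcases le_total (h v) (f v) with hle | hle
  · have e1 : Qt A (fun u => max (f u) (h u)) v ≤ Qt A f v := by
      rw [Qt_expand, Qt_expand]
      rw [max_eq_left hle]
      have hs : ∑ u, (A u v : ℤ) * f u ≤ ∑ u, (A u v : ℤ) * max (f u) (h u) :=
        Finset.sum_le_sum fun u _ =>
          mul_le_mul_of_nonneg_left (le_max_left _ _) (by positivity)
      linarith
    have := hf v hv; linarith
  · have e1 : Qt A (fun u => max (f u) (h u)) v ≤ Qt A h v := by
      rw [Qt_expand, Qt_expand]
      rw [max_eq_right hle]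
      have hs : ∑ u, (A u v : ℤ) * h u ≤ ∑ u, (A u v : ℤ) * max (f u) (h u) :=
        Finset.sum_le_sum fun u _ =>
          mul_le_mul_of_nonneg_left (le_max_right _ _) (by positivity)
      linarith
    have := hh v hv; linarith

lemma exists_Sf_mem (A : Fin (n + 1) → Fin (n + 1) → ℕ) (R : Fin (n + 1) → ℤ)
    (v₀ : Fin (n + 1)) (D : Fin (n + 1) → ℤ)
    (hconn : StronglyConnected n A) (hRpos : ∀ i, 0 < R i)
    (hker : ∀ i, ∑ j, lap n A j i * R j = 0) (c : ℤ) :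
    ∃ f, f v₀ = c ∧ Sf A v₀ D f := by
  classical
  set K : ℕ := 1 + ∑ u, ∑ j, A u j with hKdef
  have hK1' : (1 : ℤ) ≤ (K : ℤ) := by exact_mod_cast Nat.le_add_right 1 _
  have hKout : ∀ u, outdeg n A u + 1 ≤ (K : ℤ) := by
    intro u
    have h1 : ∑ j, A u j ≤ ∑ u, ∑ j, A u j :=
      Finset.single_le_sum (f := fun u => ∑ j, A u j) (fun i _ => Nat.zero_le _)
        (Finset.mem_univ u)
    have : outdeg n A u ≤ ((∑ u, ∑ j, A u j : ℕ) : ℤ) := by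
      unfold outdeg; exact_mod_cast h1
    omega
  have hB : ∀ v, Relation.ReflTransGen (fun a b => 0 < A b a) v v₀ := fun v =>
    Relation.reflTransGen_swap.mpr (hconn v₀ v)
  set d := dist hB with hd
  set N : ℕ := Finset.univ.sup d with hN
  set M : ℤ := 1 + ∑ v, |D v| with hM
  have hM0 : 0 ≤ M := by
    have : (0:ℤ) ≤ ∑ v, |D v| := Finset.sum_nonneg fun v _ => abs_nonneg _
    omega
  have hMD : ∀ v, -M < D v := by
    intro v
    have h1 : |D v| ≤ ∑ v, |D v| :=
      Finset.single_le_sum (f := fun v => |D v|) (fun i _ => abs_nonneg _) (Finset.mem_univ v)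
    have h2 : -D v ≤ |D v| := neg_le_abs _
    omega
  set f₀ : Fin (n + 1) → ℤ := fun v => M * (K : ℤ) ^ (N - d v) with hf₀
  have hpow1 : ∀ v, (1:ℤ) ≤ (K : ℤ) ^ (N - d v) := fun v => one_le_pow₀ hK1'
  have hf₀nn : ∀ v, M ≤ f₀ v := by
    intro v; simp only [hf₀]; nlinarith [hpow1 v]
  have hf₀Qt : ∀ v, v ≠ v₀ → Qt A f₀ v ≤ -M := by
    intro v hv
    obtain ⟨u', hAu', hdu'⟩ := dist_step hB hv
    have hdN : d v ≤ N := Finset.le_sup (Finset.mem_univ v)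
    rw [Qt_expand]
    have h2 : (K : ℤ) * f₀ v ≤ f₀ u' := by
      have he : (K : ℤ) * f₀ v = M * (K:ℤ) ^ (N - d v + 1) := by
        simp only [hf₀]; rw [pow_succ]; ring
      have hdu2 : d u' < d v := hdu'
      have hexp : N - d v + 1 ≤ N - d u' := by omega
      simp only [hf₀] at he ⊢
      rw [he]
      exact mul_le_mul_of_nonneg_left (pow_le_pow_right₀ hK1' hexp) hM0
    have h3 : f₀ u' ≤ ∑ u, (A u v : ℤ) * f₀ u := by
      calc f₀ u' ≤ (A u' v : ℤ) * f₀ u' := by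
            have h1 : (1:ℤ) ≤ (A u' v : ℤ) := by exact_mod_cast hAu'
            nlinarith [hf₀nn u', hM0]
        _ ≤ ∑ u, (A u v : ℤ) * f₀ u :=
            Finset.single_le_sum (f := fun u => (A u v : ℤ) * f₀ u)
              (fun u _ => mul_nonneg (by positivity) (by linarith [hf₀nn u])) (Finset.mem_univ u')
    have h4 := hKout v
    nlinarith [hf₀nn v]
  -- now adjust the value at v₀ to c
  set j : ℕ := (f₀ v₀ - c).toNat with hj
  set k : ℤ := c + (j : ℤ) * R v₀ - f₀ v₀ with hk
  have hk0 : 0 ≤ k := by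
    have h1 : f₀ v₀ - c ≤ (j : ℤ) := Int.self_le_toNat _
    have h2 : (j:ℤ) ≤ (j:ℤ) * R v₀ := le_mul_of_one_le_right (by positivity) (hRpos v₀)
    omega
  refine ⟨fun v => f₀ v + (if v = v₀ then k else 0) - (j : ℤ) * R v, by show f₀ v₀ + (if v₀ = v₀ then k else 0) - (j : ℤ) * R v₀ = c; rw [if_pos rfl, hk]; ring, ?_⟩
  intro v hv
  have hQ : Qt A (fun v => f₀ v + (if v = v₀ then k else 0) - (j : ℤ) * R v) v
      = Qt A f₀ v + k * lap n A v₀ v - (j : ℤ) * Qt A R v := by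
    simp only [Qt_sub, Qt_add, Qt_single, Qt_const_mul]
  have hQR : Qt A R v = 0 := hker v
  have hlapneg : lap n A v₀ v ≤ 0 := by
    unfold lap
    rw [if_neg (fun h => hv h.symm)]
    have : (0:ℤ) ≤ (A v₀ v : ℤ) := by positivity
    omega
  have h5 := hf₀Qt v hv
  have h6 := hMD v
  have h7 : k * lap n A v₀ v ≤ 0 := mul_nonpos_of_nonneg_of_nonpos hk0 hlapneg
  rw [hQ, hQR, mul_zero, sub_zero]
  linarith

lemma exists_BM (A : Fin (n + 1) → Fin (n + 1) → ℕ) (R : Fin (n + 1) → ℤ)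
    (v₀ : Fin (n + 1)) (D : Fin (n + 1) → ℤ)
    (hconn : StronglyConnected n A) (hRpos : ∀ i, 0 < R i)
    (hker : ∀ i, ∑ j, lap n A j i * R j = 0) (c : ℤ) :
    ∃ f, IsBM A R v₀ D c f := by
  classical
  obtain ⟨w, hw1, hwle, hwneg⟩ := exists_w A v₀ hconn
  set qw : Fin (n + 1) → ℤ := fun u => ∑ v, lap n A u v * w v with hqw
  set Φ : (Fin (n + 1) → ℤ) → ℤ := fun f => -∑ u, f u * qw u with hΦ
  -- the bound
  have hbound : ∀ f, Sf A v₀ D f → Φ f ≤ -∑ v, (w v - w v₀) * D v := by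
    intro f hf
    have h1 : ∑ v, (w v - w v₀) * (D v - Qt A f v) ≤ 0 := by
      apply Finset.sum_nonpos
      intro v _
      by_cases hv : v = v₀
      · subst hv; simp
      · exact mul_nonpos_of_nonpos_of_nonneg (by linarith [hwle v]) (hf v hv)
    have h2 : ∑ v, (w v - w v₀) * Qt A f v = ∑ u, f u * qw u := by
      rw [exchange]
      apply Finset.sum_congr rfl
      intro u _
      have : ∑ v, lap n A u v * (w v - w v₀) = qw u - w v₀ * ∑ v, lap n A u v := by
        simp only [hqw, mul_sub, Finset.sum_sub_distrib, Finset.mul_sum]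
        congr 1
        apply Finset.sum_congr rfl; intro v _; ring
      rw [this, lap_row_sum, mul_zero, sub_zero]
    have h3 : ∑ v, (w v - w v₀) * (D v - Qt A f v)
        = ∑ v, (w v - w v₀) * D v - ∑ v, (w v - w v₀) * Qt A f v := by
      rw [← Finset.sum_sub_distrib]
      apply Finset.sum_congr rfl; intro v _; ring
    rw [h3, h2] at h1
    simp only [hΦ]
    linarith
  obtain ⟨f₁, hf₁v, hf₁S⟩ := exists_Sf_mem A R v₀ D hconn hRpos hker c
  obtain ⟨y, ⟨f, ⟨hfv, hfS⟩, hfy⟩, hub⟩ :=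
    Int.exists_greatest_of_bdd (P := fun y => ∃ f, (f v₀ = c ∧ Sf A v₀ D f) ∧ Φ f = y)
      ⟨-∑ v, (w v - w v₀) * D v, fun z ⟨f, ⟨_, hfS⟩, hfz⟩ => hfz ▸ hbound f hfS⟩
      ⟨Φ f₁, f₁, ⟨hf₁v, hf₁S⟩, rfl⟩
  refine ⟨f, hfv, hfS, ?_⟩
  intro g hg0 hgv₀ hgnn hgle hSf'
  -- Φ strictly increases
  have hsplit : Φ (fun v => f v + g v) = Φ f - ∑ u, g u * qw u := by
    simp only [hΦ, add_mul, Finset.sum_add_distrib]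
    ring
  have hneg : ∑ u, g u * qw u < 0 := by
    obtain ⟨u₀, hu₀⟩ := Function.ne_iff.mp hg0
    have hu₀v : u₀ ≠ v₀ := fun h => hu₀ (h ▸ hgv₀)
    have hu₀pos : 0 < g u₀ := lt_of_le_of_ne (hgnn u₀) (Ne.symm (by simpa using hu₀))
    have : ∑ u, g u * qw u < ∑ u : Fin (n + 1), (0:ℤ) := by
      apply Finset.sum_lt_sum
      · intro u _
        by_cases hu : u = v₀
        · subst hu; simp [hgv₀]
        · exact mul_nonpos_of_nonneg_of_nonpos (hgnn u) (by linarith [hwneg u hu])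
      · exact ⟨u₀, Finset.mem_univ u₀, by nlinarith [hwneg u₀ hu₀v]⟩
    simpa using this
  have hmem : Φ (fun v => f v + g v) ≤ y :=
    hub _ ⟨fun v => f v + g v, ⟨by simp [hfv, hgv₀], hSf'⟩, rfl⟩
  rw [hsplit, hfy] at hmem
  linarith

lemma BM_ge (A : Fin (n + 1) → Fin (n + 1) → ℕ) (R : Fin (n + 1) → ℤ)
    (v₀ : Fin (n + 1)) (D : Fin (n + 1) → ℤ)
    (hRpos : ∀ i, 0 < R i) (hker : ∀ i, ∑ j, lap n A j i * R j = 0)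
    {c : ℤ} {f h : Fin (n + 1) → ℤ} (hBM : IsBM A R v₀ D c f)
    (hh0 : h v₀ = c) (hhS : Sf A v₀ D h) : ∀ v, h v ≤ f v := by
  classical
  obtain ⟨hfv₀, hfS, hmax⟩ := hBM
  set φ : ℕ → (Fin (n + 1) → ℤ) := fun k v => max (f v) (h v - (k : ℤ) * R v) with hφ
  have hSk : ∀ k : ℕ, Sf A v₀ D (φ k) := by
    intro k
    apply sup_closed hfS
    intro v hv
    have : Qt A (fun u => h u - (k : ℤ) * R u) v = Qt A h v - (k : ℤ) * Qt A R v := by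
      rw [Qt_sub, Qt_const_mul]
    have hQR : Qt A R v = 0 := hker v
    rw [this, hQR, mul_zero, sub_zero]
    exact hhS v hv
  have hv₀k : ∀ k : ℕ, φ k v₀ = c := by
    intro k
    have : h v₀ - (k : ℤ) * R v₀ ≤ f v₀ := by
      have h1 : 0 ≤ (k : ℤ) * R v₀ := mul_nonneg (by positivity) (le_of_lt (hRpos v₀))
      rw [hh0, hfv₀]; linarith
    simp only [hφ]; rw [max_eq_left this, hfv₀]
  have hstep : ∀ m : ℕ, φ (m + 1) = f → φ m = f := by
    intro m hm
    by_contra hne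
    set g : Fin (n + 1) → ℤ := fun v => φ m v - f v with hg
    have hg0 : g ≠ 0 := by
      intro he
      apply hne
      funext v
      have := congrFun he v
      simp only [hg, Pi.zero_apply, sub_eq_zero] at this
      exact this
    refine hmax g hg0 ?_ ?_ ?_ ?_
    · simp only [hg, hv₀k m, hfv₀, sub_self]
    · intro v; simp only [hg, hφ, sub_nonneg]; exact le_max_left _ _
    · intro v
      have h1 : h v - ((m : ℤ) + 1) * R v ≤ f v := by
        have := congrFun hm v
        simp only [hφ] at this
        have h2 : h v - ((m : ℕ) + 1 : ℕ) * R v ≤ max (f v) (h v - ((m : ℕ) + 1 : ℕ) * R v) :=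
          le_max_right _ _
        rw [this] at h2
        push_cast at h2 ⊢
        linarith
      have h2 : φ m v ≤ f v + R v := by
        simp only [hφ]
        apply max_le
        · linarith [hRpos v]
        · linarith
      simp only [hg]; linarith
    · have : (fun v => f v + g v) = φ m := by
        funext v; simp only [hg]; ring
      rw [this]
      exact hSk m
  set k₀ : ℕ := Finset.univ.sup fun v => (h v - f v).toNat with hk₀
  have hbase : φ k₀ = f := by
    funext v
    have h1 : h v - f v ≤ ((h v - f v).toNat : ℤ) := Int.self_le_toNat _
    have h2 : ((h v - f v).toNat : ℤ) ≤ (k₀ : ℤ) := by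
      exact_mod_cast Finset.le_sup (f := fun v => (h v - f v).toNat) (Finset.mem_univ v)
    have h3 : (k₀ : ℤ) ≤ (k₀ : ℤ) * R v := le_mul_of_one_le_right (by positivity) (hRpos v)
    simp only [hφ]
    exact max_eq_left (by linarith)
  have hdown : ∀ j : ℕ, φ (k₀ - j) = f := by
    intro j
    induction j with
    | zero => exact hbase
    | succ j ih =>
      rcases Nat.eq_zero_or_pos (k₀ - j) with h0 | hpos
      · rw [show k₀ - (j + 1) = 0 by omega, ← h0]; exact ih
      · obtain ⟨m, hm⟩ : ∃ m, k₀ - j = m + 1 := ⟨k₀ - j - 1, by omega⟩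
        rw [show k₀ - (j + 1) = m by omega]
        exact hstep m (hm ▸ ih)
  intro v
  have := congrFun (hdown k₀) v
  simp only [hφ, Nat.sub_self, Nat.cast_zero, zero_mul, sub_zero] at this
  calc h v ≤ max (f v) (h v) := le_max_right _ _
    _ = f v := this

lemma ker_lemma (A : Fin (n + 1) → Fin (n + 1) → ℕ)
    (hconn : StronglyConnected n A) (R : Fin (n + 1) → ℤ) (hRpos : ∀ i, 0 < R i)
    (hker : ∀ i, ∑ j, lap n A j i * R j = 0)
    (hgcd : ∀ d : ℤ, 0 < d → (∀ i, d ∣ R i) → d = 1)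
    (g : Fin (n + 1) → ℤ) (hg : ∀ v, ∑ u, lap n A u v * g u = 0) :
    ∃ k : ℤ, ∀ v, g v = k * R v := by
  classical
  obtain ⟨vm, -, hmax⟩ := Finset.exists_max_image Finset.univ
    (fun v => (g v : ℚ) / (R v : ℚ)) Finset.univ_nonempty
  have hcross : ∀ a, g a * R vm ≤ g vm * R a := by
    intro a
    have h1 : (g a : ℚ) / (R a : ℚ) ≤ (g vm : ℚ) / (R vm : ℚ) :=
      hmax a (Finset.mem_univ a)
    have hRa : (0:ℚ) < (R a : ℚ) := by exact_mod_cast hRpos a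
    have hRm : (0:ℚ) < (R vm : ℚ) := by exact_mod_cast hRpos vm
    rw [div_le_div_iff₀ hRa hRm] at h1
    exact_mod_cast h1
  -- T is closed under in-edges
  have hT : ∀ v, g v * R vm = g vm * R v → ∀ u, 0 < A u v → g u * R vm = g vm * R u := by
    intro v hv u hu
    have hkv : ∑ u, (A u v : ℤ) * R u = outdeg n A v * R v := by
      have h0 : Qt A R v = 0 := hker v
      rw [Qt_expand] at h0; linarith
    have hgv : ∑ u, (A u v : ℤ) * g u = outdeg n A v * g v := by
      have h0 : Qt A g v = 0 := hg v
      rw [Qt_expand] at h0; linarith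
    have hsum : ∑ u, (A u v : ℤ) * (g vm * R u - g u * R vm) = 0 := by
      have hexp : ∑ u, (A u v : ℤ) * (g vm * R u - g u * R vm)
          = g vm * (∑ u, (A u v : ℤ) * R u) - R vm * (∑ u, (A u v : ℤ) * g u) := by
        rw [Finset.mul_sum, Finset.mul_sum, ← Finset.sum_sub_distrib]
        apply Finset.sum_congr rfl; intro u _; ring
      rw [hexp, hkv, hgv]
      linear_combination (- outdeg n A v) * hv
    have hterm := (Finset.sum_eq_zero_iff_of_nonneg
      (fun u _ => mul_nonneg (by positivity) (by linarith [hcross u]))).mp hsum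
      u (Finset.mem_univ u)
    have hA : (A u v : ℤ) ≠ 0 := by
      have : (0:ℤ) < (A u v : ℤ) := by exact_mod_cast hu
      exact ne_of_gt this
    rcases mul_eq_zero.mp hterm with h | h
    · exact absurd h hA
    · linarith
  have hall : ∀ u, g u * R vm = g vm * R u := by
    intro u
    refine Relation.ReflTransGen.head_induction_on (hconn u vm) rfl ?_
    intro a c h' _ ih
    exact hT c ih a h'
  -- integrality
  set a : ℤ := g vm with ha
  set b : ℤ := R vm with hb
  have hbpos : 0 < b := hRpos vm
  set m : ℤ := (Int.gcd a b : ℤ) with hm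
  have hmpos0 : 0 < Int.gcd a b := Int.gcd_pos_of_ne_zero_right a (ne_of_gt hbpos)
  have hmpos : 0 < m := by rw [hm]; exact_mod_cast hmpos0
  have hma : m ∣ a := Int.gcd_dvd_left a b
  have hmb : m ∣ b := Int.gcd_dvd_right a b
  set a' : ℤ := a / m with ha'
  set b' : ℤ := b / m with hb'
  have haa : a = m * a' := (Int.mul_ediv_cancel' hma).symm
  have hbb : b = m * b' := (Int.mul_ediv_cancel' hmb).symm
  have hcop : Int.gcd a' b' = 1 := Int.gcd_div_gcd_div_gcd hmpos0
  have hb'pos : 0 < b' := by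
    rcases lt_trichotomy b' 0 with h | h | h
    · nlinarith
    · rw [h, mul_zero] at hbb; omega
    · exact h
  have hgb' : ∀ v, g v * b' = a' * R v := by
    intro v
    have h1 : g v * b = a * R v := hall v
    rw [haa, hbb] at h1
    have : m * (g v * b') = m * (a' * R v) := by linarith
    exact mul_left_cancel₀ (ne_of_gt hmpos) this
  have hb'dvd : ∀ v, b' ∣ R v := by
    intro v
    have h1 : b' ∣ a' * R v := ⟨g v, by linarith [hgb' v]⟩
    have h2 : IsCoprime b' a' := by
      rw [Int.isCoprime_iff_gcd_eq_one, Int.gcd_comm]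
      exact hcop
    exact h2.dvd_of_dvd_mul_left h1
  have hb'1 : b' = 1 := hgcd b' hb'pos hb'dvd
  refine ⟨a', fun v => ?_⟩
  have := hgb' v
  rw [hb'1, mul_one] at this
  exact this

end Stmt17Aux

/-- D is v₀-reduced: nonnegative away from v₀, and for every valid firing
strategy f (nonzero, f(v₀)=0, 0 ≤ f ≤ R) some vertex ≠ v₀ goes into debt in
D − Qᵀf. -/
def Reduced (n : ℕ) (A : Fin (n + 1) → Fin (n + 1) → ℕ)
    (R : Fin (n + 1) → ℤ) (v₀ : Fin (n + 1)) (D : Fin (n + 1) → ℤ) : Prop :=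
  (∀ v, v ≠ v₀ → 0 ≤ D v) ∧
  ∀ f : Fin (n + 1) → ℤ, f ≠ 0 → f v₀ = 0 → 0 ≤ f → f ≤ R →
    ∃ v, v ≠ v₀ ∧ D v - (∑ u, lap n A u v * f u) < 0

/-- Divisors are equivalent if they differ by an integer combination of the
rows of the Laplacian. -/
def LinEquiv (n : ℕ) (A : Fin (n + 1) → Fin (n + 1) → ℕ)
    (D D' : Fin (n + 1) → ℤ) : Prop :=
  ∃ f : Fin (n + 1) → ℤ, ∀ v, D v - D' v = ∑ u, lap n A u v * f u

open Stmt17Aux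

/-- for a strongly connected digraph with positive kernel vector
R (gcd of entries 1), every divisor D is equivalent to exactly r₀ = R(v₀)
distinct v₀-reduced divisors. -/
theorem stmt_17 (n : ℕ) (A : Fin (n + 1) → Fin (n + 1) → ℕ)
    (hloop : ∀ i, A i i = 0) (hconn : StronglyConnected n A)
    (R : Fin (n + 1) → ℤ) (hRpos : ∀ i, 0 < R i)
    (hker : ∀ i, ∑ j, lap n A j i * R j = 0)
    (hgcd : ∀ d : ℤ, 0 < d → (∀ i, d ∣ R i) → d = 1)
    (v₀ : Fin (n + 1)) (D : Fin (n + 1) → ℤ) :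
    (↑(Set.ncard {D' : Fin (n + 1) → ℤ |
        Reduced n A R v₀ D' ∧ LinEquiv n A D D'}) : ℤ) = R v₀ := by
  classical
  have hr₀pos : 0 < R v₀ := hRpos v₀
  choose F hF using fun c : ℤ => exists_BM A R v₀ D hconn hRpos hker c
  set G : ℤ → (Fin (n + 1) → ℤ) := fun c => fun v => D v - Qt A (F c) v with hG
  have hset : {D' : Fin (n + 1) → ℤ | Reduced n A R v₀ D' ∧ LinEquiv n A D D'}
      = G '' (Set.Ico 0 (R v₀)) := by
    ext D'
    simp only [Set.mem_setOf_eq, Set.mem_image, Set.mem_Ico]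
    constructor
    · rintro ⟨⟨hred1, hred2⟩, f, hf⟩
      set c : ℤ := f v₀ % R v₀ with hc
      set q : ℤ := f v₀ / R v₀ with hq
      have hc0 : 0 ≤ c := Int.emod_nonneg _ (ne_of_gt hr₀pos)
      have hc1 : c < R v₀ := Int.emod_lt_of_pos _ hr₀pos
      set f' : Fin (n + 1) → ℤ := fun v => f v - q * R v with hf'
      have hQtf' : ∀ v, Qt A f' v = Qt A f v := by
        intro v
        have h0 : Qt A R v = 0 := hker v
        rw [hf', Qt_sub, Qt_const_mul, h0, mul_zero, sub_zero]
      have hD' : ∀ v, D' v = D v - Qt A f' v := by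
        intro v
        have h1 : D v - D' v = Qt A f v := hf v
        rw [hQtf']; linarith
      have hf'v₀ : f' v₀ = c := by
        simp only [hf', hc, hq, Int.emod_def]
        ring
      have hSf' : Sf A v₀ D f' := by
        intro v hv
        rw [← hD' v]
        exact hred1 v hv
      have hBMf' : IsBM A R v₀ D c f' := by
        refine ⟨hf'v₀, hSf', ?_⟩
        intro g hg0 hgv₀ hgnn hgle hcon
        obtain ⟨v, hv, hneg⟩ := hred2 g hg0 hgv₀ (Pi.le_def.mpr hgnn) (Pi.le_def.mpr hgle)
        have h2 : 0 ≤ D v - Qt A (fun u => f' u + g u) v := hcon v hv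
        rw [Qt_add] at h2
        have h3 : D' v - Qt A g v < 0 := hneg
        rw [hD' v] at h3
        linarith
      have h1 : ∀ v, f' v ≤ F c v :=
        BM_ge A R v₀ D hRpos hker (hF c) hf'v₀ hSf'
      have h2 : ∀ v, F c v ≤ f' v :=
        BM_ge A R v₀ D hRpos hker hBMf' (hF c).1 (hF c).2.1
      have hFeq : F c = f' := funext fun v => le_antisymm (h2 v) (h1 v)
      refine ⟨c, ⟨hc0, hc1⟩, ?_⟩
      funext v
      rw [hG]
      simp only [hFeq]
      rw [← hD' v]
    · rintro ⟨c, ⟨hc0, hc1⟩, rfl⟩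
      obtain ⟨hv₀c, hSfc, hbox⟩ := hF c
      refine ⟨⟨?_, ?_⟩, ⟨F c, fun v => by show D v - (D v - Qt A (F c) v) = Qt A (F c) v; ring⟩⟩
      · intro v hv
        exact hSfc v hv
      · intro g hg0 hgv₀ hgnn hgle
        by_contra hno
        push_neg at hno
        apply hbox g hg0 hgv₀ (fun v => hgnn v) (fun v => hgle v)
        intro v hv
        have h1 : 0 ≤ G c v - Qt A g v := hno v hv
        rw [Qt_add]
        simp only [hG] at h1
        linarith
  have hinj : Set.InjOn G (Set.Ico 0 (R v₀)) := by
    rintro c ⟨hc0, hc1⟩ c' ⟨hc'0, hc'1⟩ hcc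
    have hQ0 : ∀ v, ∑ u, lap n A u v * (F c u - F c' u) = 0 := by
      intro v
      have h1 := congrFun hcc v
      simp only [hG] at h1
      have h2 : Qt A (F c) v = Qt A (F c') v := by linarith
      have h3 : Qt A (fun u => F c u - F c' u) v = 0 := by
        rw [Qt_sub, h2, sub_self]
      exact h3
    obtain ⟨k, hk⟩ := ker_lemma A hconn R hRpos hker hgcd _ hQ0
    have hv₀ := hk v₀
    rw [(hF c).1, (hF c').1] at hv₀
    have hk0 : k = 0 := by nlinarith
    rw [hk0, zero_mul] at hv₀
    linarith
  rw [hset, Set.ncard_image_of_injOn hinj,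
    show (Set.Ico (0:ℤ) (R v₀)) = ↑(Finset.Ico (0:ℤ) (R v₀)) from (Finset.coe_Ico _ _).symm,
    Set.ncard_coe_finset, Int.card_Ico]
  simp [Int.toNat_of_nonneg (le_of_lt hr₀pos)]
end

section
/- Let G⃗ be a strongly connected directed graph, v_0 a fixed vertex, and K the divisor with K(v_i) = deg⁺(v_i) − 2. A v_0-stable sandpile configuration D is v_0-recurrent if and only if the divisor ν defined by ν(v_i) = deg⁺(v_i) − 1 − D(v_i) for all i is a v_0-reduced divisor. -/
/-- A v₀-sandpile configuration: nonnegative away from v₀. -/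
def SandpileConfig (n : ℕ) (v₀ : Fin (n + 1)) (D : Fin (n + 1) → ℤ) : Prop :=
  ∀ v, v ≠ v₀ → 0 ≤ D v

/-- A configuration is v₀-stable if no vertex other than v₀ can fire. -/
def Stable (n : ℕ) (A : Fin (n + 1) → Fin (n + 1) → ℕ) (v₀ : Fin (n + 1))
    (D : Fin (n + 1) → ℤ) : Prop :=
  ∀ v, v ≠ v₀ → D v < outdeg n A v

/-- One legal sandpile move: some vertex v ≠ v₀ with at least outdeg(v) chips
fires (D' = D − Qᵀ e_v). -/
def Step (n : ℕ) (A : Fin (n + 1) → Fin (n + 1) → ℕ) (v₀ : Fin (n + 1))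
    (D D' : Fin (n + 1) → ℤ) : Prop :=
  ∃ v, v ≠ v₀ ∧ outdeg n A v ≤ D v ∧ ∀ u, D' u = D u - lap n A v u

/-- D stabilizes to D': a finite sequence of legal firings from D reaching a
stable configuration D'. -/
def StabilizesTo (n : ℕ) (A : Fin (n + 1) → Fin (n + 1) → ℕ)
    (v₀ : Fin (n + 1)) (D D' : Fin (n + 1) → ℤ) : Prop :=
  Relation.ReflTransGen (Step n A v₀) D D' ∧ Stable n A v₀ D'

/-- D is v₀-recurrent: it is stable and reachable (up to the value at v₀),
after adding an effective divisor and stabilizing, from every v₀-sandpile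
configuration. -/
def Recurrent (n : ℕ) (A : Fin (n + 1) → Fin (n + 1) → ℕ)
    (v₀ : Fin (n + 1)) (D : Fin (n + 1) → ℤ) : Prop :=
  Stable n A v₀ D ∧
  ∀ D'' : Fin (n + 1) → ℤ, SandpileConfig n v₀ D'' →
    ∃ E : Fin (n + 1) → ℤ, 0 ≤ E ∧
      ∃ D₃ : Fin (n + 1) → ℤ, StabilizesTo n A v₀ (D'' + E) D₃ ∧
        ∀ v, v ≠ v₀ → D₃ v = D v

section Helpers

variable {n : ℕ} {A : Fin (n + 1) → Fin (n + 1) → ℕ} {v₀ : Fin (n + 1)}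

/-- Action of the transposed Laplacian on a firing strategy. -/
def QT (n : ℕ) (A : Fin (n + 1) → Fin (n + 1) → ℕ) (g : Fin (n + 1) → ℤ)
    (v : Fin (n + 1)) : ℤ :=
  ∑ u, lap n A u v * g u

lemma QT_def (g : Fin (n + 1) → ℤ) (v : Fin (n + 1)) :
    QT n A g v = ∑ u, lap n A u v * g u := rfl

lemma outdeg_nonneg (i : Fin (n + 1)) : 0 ≤ outdeg n A i :=
  Finset.sum_nonneg fun j _ => by positivity

lemma lap_le_ite (u v : Fin (n + 1)) :
    lap n A u v ≤ if u = v then outdeg n A v else 0 := by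
  unfold lap
  split_ifs with h
  · subst h
    have : (0:ℤ) ≤ (A u u : ℤ) := Int.natCast_nonneg _
    linarith
  · have : (0:ℤ) ≤ (A u v : ℤ) := Int.natCast_nonneg _
    linarith

lemma lap_offdiag {u v : Fin (n + 1)} (h : u ≠ v) :
    lap n A u v = -(A u v : ℤ) := by
  unfold lap
  rw [if_neg h]
  ring

lemma lap_diag (hloop : ∀ i, A i i = 0) (v : Fin (n + 1)) :
    lap n A v v = outdeg n A v := by
  unfold lap
  rw [if_pos rfl, hloop v]
  simp

lemma QT_le (g : Fin (n + 1) → ℤ) (hg : ∀ u, 0 ≤ g u) (v : Fin (n + 1)) :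
    QT n A g v ≤ outdeg n A v * g v := by
  calc QT n A g v ≤ ∑ u, (if u = v then outdeg n A v else 0) * g u :=
        Finset.sum_le_sum fun u _ => mul_le_mul_of_nonneg_right (lap_le_ite u v) (hg u)
    _ = outdeg n A v * g v := by simp [ite_mul]

lemma QT_sub (a b : Fin (n + 1) → ℤ) (v : Fin (n + 1)) :
    QT n A (fun u => a u - b u) v = QT n A a v - QT n A b v := by
  unfold QT
  rw [← Finset.sum_sub_distrib]
  exact Finset.sum_congr rfl fun u _ => by ring

lemma QT_smul (c : ℤ) (a : Fin (n + 1) → ℤ) (v : Fin (n + 1)) :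
    QT n A (fun u => c * a u) v = c * QT n A a v := by
  unfold QT
  rw [Finset.mul_sum]
  exact Finset.sum_congr rfl fun u _ => by ring

lemma QT_sub_single (g : Fin (n + 1) → ℤ) (w v : Fin (n + 1)) (c : ℤ) :
    QT n A (fun u => g u - (if u = w then c else 0)) v
      = QT n A g v - lap n A w v * c := by
  rw [QT_sub]
  congr 1
  unfold QT
  simp [mul_ite]

lemma QT_add_single (g : Fin (n + 1) → ℤ) (w v : Fin (n + 1)) (c : ℤ) :
    QT n A (fun u => g u + (if u = w then c else 0)) v
      = QT n A g v + lap n A w v * c := by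
  have := QT_sub_single (A := A) (fun u => g u + (if u = w then c else 0)) w v c
  simp only [add_sub_cancel_right] at this
  linarith

end Helpers

section Core

variable {n : ℕ} {A : Fin (n + 1) → Fin (n + 1) → ℕ} {v₀ : Fin (n + 1)}

/-- Every firing sequence has a well-defined count vector. -/
lemma counts {X Y : Fin (n + 1) → ℤ}
    (h : Relation.ReflTransGen (Step n A v₀) X Y) :
    ∃ g : Fin (n + 1) → ℤ, (∀ u, 0 ≤ g u) ∧ g v₀ = 0 ∧
      ∀ u, Y u = X u - QT n A g u := by
  induction h with
  | refl =>
      exact ⟨0, fun u => le_refl 0, rfl, fun u => by simp [QT]⟩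
  | tail hab hbc ih =>
      obtain ⟨g, hg0, hgv, hgeq⟩ := ih
      obtain ⟨v, hv, _, hstep⟩ := hbc
      refine ⟨fun u => g u + (if u = v then 1 else 0), ?_, ?_, ?_⟩
      · intro u
        have := hg0 u
        dsimp only
        split_ifs <;> linarith
      · dsimp only
        rw [if_neg (fun h => hv h.symm), hgv]; ring
      · intro u
        rw [hstep u, hgeq u, QT_add_single]
        ring

/-- Least action principle: legal firing counts are bounded by any
nonnegative vector whose firing yields a stable configuration. -/
lemma LAP {X Y : Fin (n + 1) → ℤ}
    (hseq : Relation.ReflTransGen (Step n A v₀) X Y) :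
    ∀ h : Fin (n + 1) → ℤ, (∀ u, 0 ≤ h u) →
      (∀ v, v ≠ v₀ → X v - QT n A h v < outdeg n A v) →
      ∃ g : Fin (n + 1) → ℤ, (∀ u, 0 ≤ g u) ∧ (∀ u, g u ≤ h u) ∧
        ∀ u, Y u = X u - QT n A g u := by
  induction hseq using Relation.ReflTransGen.head_induction_on with
  | refl =>
      intro h h0 _
      exact ⟨0, fun u => le_refl 0, h0, fun u => by simp [QT]⟩
  | head hab hbY ih =>
      intro h h0 hst
      obtain ⟨v, hv, hfire, hb⟩ := hab
      have hv1 : 1 ≤ h v := by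
        have h2 : 0 < QT n A h v := by
          have := hst v hv
          linarith
        have h3 := QT_le (A := A) h h0 v
        rcases lt_or_ge 0 (h v) with h4 | h4
        · exact h4
        · exfalso
          have : outdeg n A v * h v ≤ 0 :=
            mul_nonpos_of_nonneg_of_nonpos (outdeg_nonneg v) h4
          linarith
      obtain ⟨g', k0, k1, k2⟩ := ih (fun u => h u - (if u = v then 1 else 0))
        (fun u => by
          have := h0 u
          split_ifs with hh
          · subst hh; linarith
          · linarith)
        (by intro x hx
            rw [QT_sub_single]
            have := hst x hx
            rw [hb x]
            linarith)
      refine ⟨fun u => g' u + (if u = v then 1 else 0), ?_, ?_, ?_⟩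
      · intro u
        have := k0 u
        dsimp only
        split_ifs <;> linarith
      · intro u
        have := k1 u
        dsimp only
        split_ifs at this ⊢ <;> linarith
      · intro u
        rw [k2 u, hb u, QT_add_single]
        ring

/-- Every vertex other than `v₀` has an outgoing edge. -/
lemma outdeg_pos (hconn : StronglyConnected n A) {v : Fin (n + 1)}
    (hv : v ≠ v₀) : 1 ≤ outdeg n A v := by
  have h := hconn v v₀
  rcases Relation.ReflTransGen.cases_head h with h | ⟨b, hb, _⟩
  · exact absurd h hv
  · have h1 : (1:ℤ) ≤ (A v b : ℤ) := by exact_mod_cast hb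
    calc (1:ℤ) ≤ (A v b : ℤ) := h1
      _ ≤ ∑ j, (A v j : ℤ) :=
        Finset.single_le_sum (fun j _ => Int.natCast_nonneg _) (Finset.mem_univ b)

/-- From a path leaving a set there is an edge leaving the set. -/
lemma exit_edge {S : Finset (Fin (n + 1))} {a v : Fin (n + 1)}
    (hpath : Relation.ReflTransGen (fun x y => 0 < A x y) a v)
    (hv : v ∉ S) :
    a ∈ S → ∃ u ∈ S, ∃ w, w ∉ S ∧ 0 < A u w := by
  induction hpath using Relation.ReflTransGen.head_induction_on with
  | refl => intro h; exact absurd h hv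
  | @head a b hab hbv ih =>
      intro haS
      by_cases hb : b ∈ S
      · exact ih hb
      · exact ⟨a, haS, b, hb, hab⟩

end Core

section Greedy

variable {n : ℕ} {A : Fin (n + 1) → Fin (n + 1) → ℕ} {v₀ : Fin (n + 1)}

/-- Greedy unwinding: if ν is reduced, then from `D + Qᵀg` there is a legal
firing sequence with counts exactly `g`, ending at `D` away from `v₀`. -/
lemma greedy (hloop : ∀ i, A i i = 0) {R : Fin (n + 1) → ℤ} (hRpos : ∀ i, 0 < R i)
    (hker : ∀ i, ∑ j, lap n A j i * R j = 0)
    {D : Fin (n + 1) → ℤ} (hstab : Stable n A v₀ D)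
    (hred : ∀ f : Fin (n + 1) → ℤ, f ≠ 0 → f v₀ = 0 → 0 ≤ f → f ≤ R →
      ∃ v, v ≠ v₀ ∧ (outdeg n A v - 1 - D v) - (∑ u, lap n A u v * f u) < 0) :
    ∀ N : ℕ, ∀ g X : Fin (n + 1) → ℤ, (∀ u, 0 ≤ g u) → g v₀ = 0 →
      (∑ v, g v) ≤ (N : ℤ) →
      (∀ v, v ≠ v₀ → X v = D v + QT n A g v) →
      ∃ Y, Relation.ReflTransGen (Step n A v₀) X Y ∧ ∀ v, v ≠ v₀ → Y v = D v := by
  intro N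
  induction N with
  | zero =>
      intro g X hg hgv hsum hX
      -- then g = 0 since 0 ≤ g and ∑ g ≤ 0
      have hg0 : ∀ u, g u = 0 := by
        intro u
        by_contra hu
        have h1 : 1 ≤ g u := lt_of_le_of_ne (hg u) (Ne.symm hu)
        have h2 : (1:ℤ) ≤ ∑ v, g v := by
          calc (1:ℤ) ≤ g u := h1
            _ ≤ ∑ v, g v := Finset.single_le_sum (fun v _ => hg v) (Finset.mem_univ u)
        simp at hsum
        linarith
      refine ⟨X, Relation.ReflTransGen.refl, fun v hv => ?_⟩
      rw [hX v hv]
      have : QT n A g v = 0 := by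
        rw [QT_def]
        apply Finset.sum_eq_zero
        intro u _
        rw [hg0 u, mul_zero]
      rw [this, add_zero]
  | succ N ih =>
      intro g X hg hgv hsum hX
      by_cases hgz : ∀ u, g u = 0
      · refine ⟨X, Relation.ReflTransGen.refl, fun v hv => ?_⟩
        rw [hX v hv]
        have : QT n A g v = 0 := by
          rw [QT_def]
          exact Finset.sum_eq_zero fun u _ => by rw [hgz u, mul_zero]
        rw [this, add_zero]
      · -- choose the minimal M with g ≤ M • R
        have hex : ∃ k : ℕ, 1 ≤ k ∧ ∀ v, g v ≤ (k : ℤ) * R v := by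
          refine ⟨(∑ v, g v).toNat + 1, Nat.succ_le_succ (Nat.zero_le _), fun v => ?_⟩
          have h1 : g v ≤ ∑ u, g u := Finset.single_le_sum (fun u _ => hg u) (Finset.mem_univ v)
          have h2 : (∑ u, g u) ≤ (((∑ v, g v).toNat : ℤ) + 1) := by
            have := Int.self_le_toNat (∑ v, g v)
            linarith
          have h3 : (1:ℤ) ≤ R v := hRpos v
          have h4 : (0:ℤ) ≤ (((∑ v, g v).toNat : ℤ) + 1) := by positivity
          calc g v ≤ (((∑ v, g v).toNat : ℤ) + 1) := le_trans h1 h2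
            _ = (((∑ v, g v).toNat : ℤ) + 1) * 1 := by ring
            _ ≤ (((∑ v, g v).toNat : ℤ) + 1) * R v := by
                exact mul_le_mul_of_nonneg_left h3 h4
            _ = (((∑ v, g v).toNat + 1 : ℕ) : ℤ) * R v := by push_cast; ring
        set M : ℕ := Nat.find hex with hM
        obtain ⟨hM1, hM2⟩ := Nat.find_spec hex
        have hM1' : (1:ℤ) ≤ (M : ℤ) := by exact_mod_cast hM1
        set f : Fin (n + 1) → ℤ := fun v => max (g v - ((M:ℤ) - 1) * R v) 0 with hf
        have hfnn : ∀ v, 0 ≤ f v := fun v => le_max_right _ _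
        have hfle : ∀ v, f v ≤ g v := by
          intro v
          apply max_le _ (hg v)
          have : 0 ≤ ((M:ℤ) - 1) * R v := mul_nonneg (by linarith) (hRpos v).le
          linarith
        have hfleR : ∀ v, f v ≤ R v := by
          intro v
          apply max_le _ (hRpos v).le
          have := hM2 v
          nlinarith [hRpos v]
        have hfv₀ : f v₀ = 0 := by
          rw [hf]
          dsimp only
          rw [hgv]
          have : 0 ≤ ((M:ℤ) - 1) * R v₀ := mul_nonneg (by linarith) (hRpos v₀).le
          rw [max_eq_right (by linarith)]
        have hcompl : ∀ v, g v - f v ≤ ((M:ℤ) - 1) * R v := by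
          intro v
          have : g v - ((M:ℤ) - 1) * R v ≤ f v := le_max_left _ _
          linarith
        have hfnz : f ≠ 0 := by
          have : ∃ v, 0 < f v := by
            rcases Nat.lt_or_ge 1 M with hM2' | hM2'
            · -- M ≥ 2 : minimality at M - 1
              have hmin := Nat.find_min hex (m := M - 1) (by omega)
              push_neg at hmin
              obtain ⟨v, hvlt⟩ := hmin (by omega)
              refine ⟨v, ?_⟩
              have hcast : ((M - 1 : ℕ) : ℤ) = (M:ℤ) - 1 := by
                have : (1:ℕ) ≤ M := hM1
                push_cast [Nat.cast_sub this]
                ring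
              rw [hcast] at hvlt
              have : 0 < g v - ((M:ℤ) - 1) * R v := by linarith
              exact lt_of_lt_of_le this (le_max_left _ _)
            · -- M = 1
              have hM11 : M = 1 := le_antisymm hM2' hM1
              obtain ⟨u, hu⟩ := not_forall.mp hgz
              refine ⟨u, ?_⟩
              have h1 : 0 < g u := lt_of_le_of_ne (hg u) (Ne.symm hu)
              have : ((M:ℤ) - 1) = 0 := by rw [hM11]; ring
              calc (0:ℤ) < g u := h1
                _ = g u - ((M:ℤ) - 1) * R u := by rw [this]; ring
                _ ≤ f u := le_max_left _ _
          obtain ⟨v, hv⟩ := this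
          intro hc
          rw [hc] at hv
          exact lt_irrefl 0 hv
        obtain ⟨v, hv, hviol⟩ := hred f hfnz hfv₀ (fun u => hfnn u) (fun u => hfleR u)
        rw [← QT_def] at hviol
        -- f v > 0
        have hfv : 0 < f v := by
          by_contra hc
          push_neg at hc
          have hfv0 : f v = 0 := le_antisymm hc (hfnn v)
          have h1 : QT n A f v ≤ outdeg n A v * f v := QT_le f hfnn v
          rw [hfv0, mul_zero] at h1
          have := hstab v hv
          linarith
        have hfveq : f v = g v - ((M:ℤ) - 1) * R v := by
          rcases max_cases (g v - ((M:ℤ) - 1) * R v) 0 with ⟨h1, _⟩ | ⟨h1, _⟩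
          · rw [hf]; exact h1
          · rw [hf] at hfv; dsimp only at hfv; omega
        -- key: X v ≥ outdeg v
        have hQTdiff : 0 ≤ QT n A (fun u => g u - f u) v := by
          have hterm : ∀ u, lap n A u v * (((M:ℤ) - 1) * R u) ≤ lap n A u v * (g u - f u) := by
            intro u
            by_cases huv : u = v
            · subst huv
              rw [hfveq]
              have : g u - (g u - ((M:ℤ) - 1) * R u) = ((M:ℤ) - 1) * R u := by ring
              rw [this]
            · have hlap : lap n A u v ≤ 0 := by
                rw [lap_offdiag huv]
                have : (0:ℤ) ≤ (A u v : ℤ) := Int.natCast_nonneg _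
                linarith
              exact mul_le_mul_of_nonpos_left (hcompl u) hlap
          have hsum2 : ∑ u, lap n A u v * (((M:ℤ) - 1) * R u)
              ≤ ∑ u, lap n A u v * (g u - f u) := Finset.sum_le_sum fun u _ => hterm u
          have hzero : ∑ u, lap n A u v * (((M:ℤ) - 1) * R u) = 0 := by
            have : ∀ u, lap n A u v * (((M:ℤ) - 1) * R u) = ((M:ℤ) - 1) * (lap n A u v * R u) := by
              intro u; ring
            rw [Finset.sum_congr rfl fun u _ => this u, ← Finset.mul_sum, hker v, mul_zero]
          rw [QT_def]
          linarith
        have hXv : outdeg n A v ≤ X v := by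
          have h1 : QT n A (fun u => g u - f u) v = QT n A g v - QT n A f v := QT_sub g f v
          rw [hX v hv]
          linarith
        -- fire v
        set X' : Fin (n + 1) → ℤ := fun u => X u - lap n A v u with hX'
        have hstep : Step n A v₀ X X' := ⟨v, hv, hXv, fun u => rfl⟩
        set g' : Fin (n + 1) → ℤ := fun u => g u - (if u = v then 1 else 0) with hg'
        have hfv1 : (1:ℤ) ≤ f v := hfv
        have hgv1 : (1:ℤ) ≤ g v := le_trans hfv1 (hfle v)
        have hg'nn : ∀ u, 0 ≤ g' u := by
          intro u
          rw [hg']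
          dsimp only
          split_ifs with hh
          · subst hh; linarith
          · simpa using hg u
        have hg'v₀ : g' v₀ = 0 := by
          rw [hg']
          dsimp only
          rw [if_neg (fun h => hv h.symm), hgv]
          ring
        have hg'sum : (∑ u, g' u) ≤ (N : ℤ) := by
          have : (∑ u, g' u) = (∑ u, g u) - 1 := by
            rw [hg']
            rw [Finset.sum_sub_distrib]
            simp
          rw [this]
          push_cast at hsum ⊢
          linarith
        have hX'inv : ∀ u, u ≠ v₀ → X' u = D u + QT n A g' u := by
          intro u hu
          rw [hX', hg']
          dsimp only
          rw [QT_sub_single, hX u hu]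
          ring
        obtain ⟨Y, hYseq, hY⟩ := ih g' X' hg'nn hg'v₀ hg'sum hX'inv
        exact ⟨Y, Relation.ReflTransGen.head hstep hYseq, hY⟩

end Greedy

section Posvec

variable {n : ℕ} {A : Fin (n + 1) → Fin (n + 1) → ℕ} {v₀ : Fin (n + 1)}
variable {R : Fin (n + 1) → ℤ}

lemma QT_add (a b : Fin (n + 1) → ℤ) (v : Fin (n + 1)) :
    QT n A (fun u => a u + b u) v = QT n A a v + QT n A b v := by
  unfold QT
  rw [← Finset.sum_add_distrib]
  exact Finset.sum_congr rfl fun u _ => by ring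

lemma QT_comb (K : ℤ) (g c : Fin (n + 1) → ℤ) (u v : Fin (n + 1)) :
    QT n A (fun x => K * g x + c x - (if x = u then 1 else 0)) v
      = K * QT n A g v + QT n A c v - lap n A u v := by
  have e : ∀ x, (fun x => K * g x + c x - (if x = u then 1 else 0)) x
      = (K * g x + c x) - (if x = u then 1 else 0) := fun x => rfl
  have h1 := QT_sub_single (A := A) (fun x => K * g x + c x) u v 1
  have h2 := QT_add (A := A) (fun x => K * g x) c v
  have h3 := QT_smul (A := A) K g v
  calc QT n A (fun x => K * g x + c x - (if x = u then 1 else 0)) v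
      = QT n A (fun x => K * g x + c x) v - lap n A u v * 1 := h1
    _ = K * QT n A g v + QT n A c v - lap n A u v := by rw [h2, h3]; ring

lemma QT_chi (hker : ∀ i, ∑ j, lap n A j i * R j = 0)
    {v : Fin (n + 1)} (hv : v ≠ v₀) :
    QT n A (fun x => if x = v₀ then 0 else R x) v = (A v₀ v : ℤ) * R v₀ := by
  have he : (fun x => if x = v₀ then (0:ℤ) else R x)
      = fun x => R x - (if x = v₀ then R v₀ else 0) := by
    funext x
    split_ifs with h
    · subst h; ring
    · ring
  rw [he, QT_sub_single]
  have h1 : QT n A R v = 0 := hker v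
  have h2 : lap n A v₀ v = -(A v₀ v : ℤ) := lap_offdiag (Ne.symm hv)
  rw [h1, h2]
  ring

/-- Invariant for the positivity-vector construction. -/
def SInv (n : ℕ) (A : Fin (n + 1) → Fin (n + 1) → ℕ) (v₀ : Fin (n + 1))
    (S : Finset (Fin (n + 1))) (g : Fin (n + 1) → ℤ) : Prop :=
  (∀ u, 0 ≤ g u) ∧ g v₀ = 0 ∧ (∀ v, v ≠ v₀ → 0 ≤ QT n A g v) ∧
    ∀ v ∈ S, v ≠ v₀ → 1 ≤ QT n A g v ∧ 1 ≤ g v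

/-- There is a nonnegative strategy, zero at `v₀`, whose firing strictly
increases every other vertex. -/
lemma posvec (hloop : ∀ i, A i i = 0) (hconn : StronglyConnected n A)
    (hRpos : ∀ i, 0 < R i) (hker : ∀ i, ∑ j, lap n A j i * R j = 0) :
    ∃ g : Fin (n + 1) → ℤ, (∀ u, 0 ≤ g u) ∧ g v₀ = 0 ∧
      ∀ v, v ≠ v₀ → 1 ≤ QT n A g v := by
  have main : ∀ k : ℕ, ∀ S : Finset (Fin (n + 1)), v₀ ∈ S →
      (Finset.univ : Finset (Fin (n + 1))).card ≤ S.card + k →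
      (∃ g, SInv n A v₀ S g) →
      ∃ g, SInv n A v₀ (Finset.univ : Finset (Fin (n + 1))) g := by
    intro k
    induction k with
    | zero =>
        intro S hv₀S hcard hex
        have hSu : S = Finset.univ := by
          apply Finset.eq_univ_of_card
          have h1 := Finset.card_le_univ S
          have h2 : (Finset.univ : Finset (Fin (n + 1))).card = Fintype.card (Fin (n + 1)) :=
            Finset.card_univ
          omega
        rw [← hSu]
        exact hex
    | succ k ih =>
        intro S hv₀S hcard hex
        by_cases hS : S = Finset.univ
        · rw [← hS]; exact hex
        · obtain ⟨v, hv⟩ : ∃ v, v ∉ S := by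
            by_contra h
            push_neg at h
            exact hS (Finset.eq_univ_iff_forall.mpr h)
          obtain ⟨u, huS, w, hwS, huw⟩ := exit_edge (hconn v₀ v) hv hv₀S
          obtain ⟨g, hg0, hgv₀, hgnn, hgS⟩ := hex
          have hwv₀ : w ≠ v₀ := fun h => hwS (h ▸ hv₀S)
          have huw1 : (1:ℤ) ≤ (A u w : ℤ) := by exact_mod_cast huw
          have hcard' : (Finset.univ : Finset (Fin (n + 1))).card ≤ (insert w S).card + k := by
            rw [Finset.card_insert_of_notMem hwS]
            omega
          apply ih (insert w S) (Finset.mem_insert_of_mem hv₀S) hcard'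
          by_cases hu : u = v₀
          · -- fire along the kernel vector once
            subst hu
            refine ⟨fun x => g x + (if x = u then 0 else R x), ?_, ?_, ?_, ?_⟩
            · intro x
              have := hg0 x
              dsimp only
              split_ifs with h
              · linarith
              · have := (hRpos x).le; linarith
            · dsimp only
              rw [if_pos rfl, hgv₀]
              ring
            · intro x hx
              rw [QT_add, QT_chi hker hx]
              have h1 := hgnn x hx
              have h2 : (0:ℤ) ≤ (A u x : ℤ) := Int.natCast_nonneg _
              have h3 := (hRpos u).le
              nlinarith
            · intro x hxS hx
              rw [QT_add, QT_chi hker hx]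
              constructor
              · rcases Finset.mem_insert.mp hxS with h | h
                · subst h
                  have h1 := hgnn x hx
                  have h3 := hRpos u
                  nlinarith
                · have h1 := (hgS x h hx).1
                  have h2 : (0:ℤ) ≤ (A u x : ℤ) := Int.natCast_nonneg _
                  have h3 := (hRpos u).le
                  nlinarith
              · dsimp only
                rw [if_neg hx]
                have := hg0 x
                have := hRpos x
                linarith
          · -- u ∈ S, u ≠ v₀ : use u's surplus
            obtain ⟨hQTu, hgu⟩ := hgS u huS hu
            set K : ℤ := outdeg n A u + 2 with hK
            have hK2 : (2:ℤ) ≤ K := by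
              have := outdeg_nonneg (A := A) u
              linarith
            refine ⟨fun x => K * g x + (if x = v₀ then 0 else R x) - (if x = u then 1 else 0),
              ?_, ?_, ?_, ?_⟩
            · intro x
              dsimp only
              by_cases h1 : x = v₀
              · subst h1
                rw [if_pos rfl, if_neg (fun h => hu h.symm), hgv₀]
                simp
              · rw [if_neg h1]
                by_cases h2 : x = u
                · subst h2
                  rw [if_pos rfl]
                  have := hRpos x
                  nlinarith
                · rw [if_neg h2]
                  have := hg0 x
                  have := (hRpos x).le
                  nlinarith
            · dsimp only
              rw [if_pos rfl, if_neg (fun h => hu h.symm), hgv₀]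
              ring
            · intro x hx
              rw [QT_comb, QT_chi hker hx]
              by_cases hxu : x = u
              · subst hxu
                rw [lap_diag hloop]
                have h2 : (0:ℤ) ≤ (A v₀ x : ℤ) := Int.natCast_nonneg _
                have h3 := (hRpos v₀).le
                nlinarith
              · rw [lap_offdiag (fun h => hxu h.symm)]
                have h1 := hgnn x hx
                have h2 : (0:ℤ) ≤ (A v₀ x : ℤ) := Int.natCast_nonneg _
                have h4 : (0:ℤ) ≤ (A u x : ℤ) := Int.natCast_nonneg _
                have h3 := (hRpos v₀).le
                nlinarith
            · intro x hxS hx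
              constructor
              · rw [QT_comb, QT_chi hker hx]
                by_cases hxu : x = u
                · subst hxu
                  rw [lap_diag hloop]
                  have h2 : (0:ℤ) ≤ (A v₀ x : ℤ) := Int.natCast_nonneg _
                  have h3 := (hRpos v₀).le
                  nlinarith
                · rw [lap_offdiag (fun h => hxu h.symm)]
                  have h2 : (0:ℤ) ≤ (A v₀ x : ℤ) := Int.natCast_nonneg _
                  have h3 := (hRpos v₀).le
                  rcases Finset.mem_insert.mp hxS with h | h
                  · subst h
                    have h1 := hgnn x hx
                    nlinarith
                  · have h1 := (hgS x h hx).1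
                    have h4 : (0:ℤ) ≤ (A u x : ℤ) := Int.natCast_nonneg _
                    nlinarith
              · dsimp only
                rw [if_neg hx]
                by_cases hxu : x = u
                · subst hxu
                  rw [if_pos rfl]
                  have := hRpos x
                  nlinarith
                · rw [if_neg hxu]
                  have := hg0 x
                  have := hRpos x
                  nlinarith
  obtain ⟨g, hg0, hgv₀, _, hgS⟩ := main ((Finset.univ : Finset (Fin (n + 1))).card) {v₀}
    (Finset.mem_singleton_self v₀)
    (by omega) ⟨0, fun u => le_refl 0, rfl,
      fun v _ => by simp [QT], fun v hvS hv => absurd (Finset.mem_singleton.mp hvS) hv⟩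
  exact ⟨g, hg0, hgv₀, fun v hv => (hgS v (Finset.mem_univ v) hv).1⟩

end Posvec

/-- a v₀-stable sandpile configuration D is v₀-recurrent iff
ν(v_i) = deg⁺(v_i) − 1 − D(v_i) defines a v₀-reduced divisor. -/
theorem stmt_18 (n : ℕ) (A : Fin (n + 1) → Fin (n + 1) → ℕ)
    (hloop : ∀ i, A i i = 0) (hconn : StronglyConnected n A)
    (R : Fin (n + 1) → ℤ) (hRpos : ∀ i, 0 < R i)
    (hker : ∀ i, ∑ j, lap n A j i * R j = 0)
    (hgcd : ∀ d : ℤ, 0 < d → (∀ i, d ∣ R i) → d = 1)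
    (v₀ : Fin (n + 1)) (D : Fin (n + 1) → ℤ)
    (hsand : SandpileConfig n v₀ D) (hstab : Stable n A v₀ D) :
    Recurrent n A v₀ D ↔
      Reduced n A R v₀ (fun i => outdeg n A i - 1 - D i) := by
  constructor
  · rintro ⟨hst, hrec⟩
    constructor
    · intro v hv
      have := hstab v hv
      dsimp only
      linarith
    · intro f hf0 hfv₀ hfnn hfR
      by_contra hcon
      push_neg at hcon
      -- hcon : ∀ v, v ≠ v₀ → 0 ≤ outdeg v - 1 - D v - QT f v
      set D₂ : Fin (n + 1) → ℤ := fun v => if v = v₀ then 0 else D v + outdeg n A v * R v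
        with hD₂
      have hconf : SandpileConfig n v₀ D₂ := by
        intro v hv
        rw [hD₂]
        dsimp only
        rw [if_neg hv]
        have h1 := hsand v hv
        have h2 := outdeg_nonneg (A := A) v
        have h3 := (hRpos v).le
        nlinarith
      obtain ⟨E, hE, D₃, ⟨hseq, hst3⟩, hD₃⟩ := hrec D₂ hconf
      have hEv : ∀ v, 0 ≤ E v := fun v => hE v
      have hXD : ∀ v, v ≠ v₀ → (D₂ + E) v - D₃ v = outdeg n A v * R v + E v := by
        intro v hv
        have h1 : D₂ v = D v + outdeg n A v * R v := by
          rw [hD₂]; dsimp only; rw [if_neg hv]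
        have h2 := hD₃ v hv
        simp only [Pi.add_apply]
        rw [h1, h2]
        ring
      have hodpos : ∀ v, v ≠ v₀ → 1 ≤ outdeg n A v := fun v hv => outdeg_pos hconn hv
      -- any count vector for the sequence dominates f
      have keyA : ∀ g' : Fin (n + 1) → ℤ, (∀ u, 0 ≤ g' u) →
          (∀ u, D₃ u = (D₂ + E) u - QT n A g' u) → ∀ v, f v ≤ g' v := by
        intro g' hg' heq v
        by_cases hv : v = v₀
        · rw [hv, hfv₀]
          exact hg' v₀
        · have h1 : QT n A g' v = (D₂ + E) v - D₃ v := by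
            have := heq v
            linarith
          have h2 : outdeg n A v * R v ≤ QT n A g' v := by
            rw [h1, hXD v hv]
            have := hEv v
            linarith
          have h3 := QT_le (A := A) g' hg' v
          have h4 : R v ≤ g' v := by
            have hpos : 0 < outdeg n A v := lt_of_lt_of_le one_pos (hodpos v hv)
            exact le_of_mul_le_mul_left (le_trans h2 h3) hpos
          exact le_trans (hfR v) h4
      obtain ⟨g₀, hg₀, hg₀v, hg₀eq⟩ := counts hseq
      have iter : ∀ k : ℕ, ∃ g' : Fin (n + 1) → ℤ, (∀ u, 0 ≤ g' u) ∧
          (∀ u, D₃ u = (D₂ + E) u - QT n A g' u) ∧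
          ∀ u, g' u ≤ g₀ u - (k : ℤ) * f u := by
        intro k
        induction k with
        | zero =>
            exact ⟨g₀, hg₀, hg₀eq, fun u => by push_cast; linarith⟩
        | succ k ih =>
            obtain ⟨g', h1, h2, h3⟩ := ih
            have hgef := keyA g' h1 h2
            have hh : ∀ u, 0 ≤ g' u - f u := fun u => by have := hgef u; linarith
            have hstabh : ∀ v, v ≠ v₀ →
                (D₂ + E) v - QT n A (fun u => g' u - f u) v < outdeg n A v := by
              intro v hv
              rw [QT_sub]
              have h5 := hcon v hv
              rw [← QT_def (A := A) f v] at h5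
              have h6 := h2 v
              have h7 := hD₃ v hv
              linarith
            obtain ⟨g'', k1, k2, k3⟩ := LAP hseq (fun u => g' u - f u) hh hstabh
            refine ⟨g'', k1, k3, fun u => ?_⟩
            have hk2 := k2 u
            have hk3 := h3 u
            have hfu := hfnn u
            push_cast
            push_cast at hk3
            nlinarith
      obtain ⟨v, hfv⟩ : ∃ v, f v ≠ 0 := Function.ne_iff.mp hf0
      have hfv1 : 1 ≤ f v := lt_of_le_of_ne (hfnn v) (Ne.symm hfv)
      obtain ⟨g', c1, c2, c3⟩ := iter ((g₀ v).toNat + 1)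
      have hc := c3 v
      have h9 : g₀ v ≤ ((g₀ v).toNat : ℤ) := Int.self_le_toNat _
      have h10 : (((g₀ v).toNat : ℤ) + 1) ≤ (((g₀ v).toNat : ℤ) + 1) * f v := by
        have : (0:ℤ) ≤ ((g₀ v).toNat : ℤ) + 1 := by positivity
        nlinarith
      have h11 := c1 v
      push_cast at hc
      linarith
  · rintro ⟨hnn, hred⟩
    refine ⟨hstab, ?_⟩
    intro D'' hD''
    obtain ⟨gs, hg1, hg2, hg3⟩ :=
      (posvec hloop hconn hRpos hker :
        ∃ g : Fin (n + 1) → ℤ, (∀ u, 0 ≤ g u) ∧ g v₀ = 0 ∧ ∀ v, v ≠ v₀ → 1 ≤ QT n A g v)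
    set m : ℤ := ∑ v, max (D'' v - D v) 0 with hm
    have hm0 : 0 ≤ m :=
      Finset.sum_nonneg fun v _ => le_max_right _ _
    have hmv : ∀ v, D'' v - D v ≤ m := by
      intro v
      rw [hm]
      calc D'' v - D v ≤ max (D'' v - D v) 0 := le_max_left _ _
        _ ≤ ∑ u, max (D'' u - D u) 0 :=
          Finset.single_le_sum (f := fun u => max (D'' u - D u) 0)
            (fun u _ => le_max_right _ _) (Finset.mem_univ v)
    set g : Fin (n + 1) → ℤ := fun u => m * gs u with hg
    have hgnn : ∀ u, 0 ≤ g u := fun u => mul_nonneg hm0 (hg1 u)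
    have hgv₀ : g v₀ = 0 := by rw [hg]; dsimp only; rw [hg2, mul_zero]
    have hQTg : ∀ v, v ≠ v₀ → m ≤ QT n A g v := by
      intro v hv
      have h1 : QT n A g v = m * QT n A gs v := QT_smul m gs v
      rw [h1]
      have := hg3 v hv
      nlinarith
    set E : Fin (n + 1) → ℤ := fun v => if v = v₀ then 0 else D v + QT n A g v - D'' v
      with hEdef
    have hE : 0 ≤ E := by
      intro v
      rw [hEdef]
      dsimp only
      split_ifs with h
      · exact le_refl 0
      · have h1 := hQTg v h
        have h2 := hmv v
        simp only [Pi.zero_apply]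
        linarith
    have hX : ∀ v, v ≠ v₀ → (D'' + E) v = D v + QT n A g v := by
      intro v hv
      simp only [Pi.add_apply]
      rw [hEdef]
      dsimp only
      rw [if_neg hv]
      ring
    obtain ⟨Y, hYseq, hY⟩ := greedy hloop hRpos hker hstab
      (by intro f hf1 hf2 hf3 hf4
          exact hred f hf1 hf2 hf3 hf4)
      ((∑ v, g v).toNat) g (D'' + E) hgnn hgv₀ (Int.self_le_toNat _) hX
    refine ⟨E, hE, Y, ⟨hYseq, ?_⟩, hY⟩
    intro v hv
    rw [hY v hv]
    exact hstab v hv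
end

section
/- Let r_0 > r_1 be positive integers with gcd(r_0, r_1) = 1, and let r_0, r_1, …, r_m be the Euclidean sequence generated by r_0 and r_1 (defined by r_{i+1} = δ_i r_i − r_{i−1} with δ_i ∈ N and r_{i+1} < r_i). Then a nonnegative integer x has a good representation with respect to r_0 and r_1 if and only if 0 ≤ x ≤ r_0 − 1, and in that case the good representation is unique. -/
/-- `t` is a good representation of `x` with respect to the Euclidean sequence
`r` with quotients `δ` (of length `m`): 0 ≤ t_i ≤ δ_i − 1 for 1 ≤ i ≤ m,
x = Σ_{i=1}^m t_i r_i, and there are no indices i < j with t_i = δ_i − 1,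
t_j = δ_j − 1 and t_k = δ_k − 2 for all i < k < j. -/
def GoodRep (m : ℕ) (r δ : ℕ → ℤ) (x : ℤ) (t : ℕ → ℤ) : Prop :=
  (∀ i, 1 ≤ i → i ≤ m → 0 ≤ t i ∧ t i ≤ δ i - 1) ∧
  x = ∑ i ∈ Finset.Icc 1 m, t i * r i ∧
  ¬ ∃ i j : ℕ, 1 ≤ i ∧ i < j ∧ j ≤ m ∧ t i = δ i - 1 ∧ t j = δ j - 1 ∧
      ∀ k, i < k → k < j → t k = δ k - 2

namespace Stmt19Aux

/-- Good representation restricted to indices `i..m`. -/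
def GR (m : ℕ) (δ : ℕ → ℤ) (i : ℕ) (t : ℕ → ℤ) : Prop :=
  (∀ k, i ≤ k → k ≤ m → 0 ≤ t k ∧ t k ≤ δ k - 1) ∧
  ¬ ∃ a b : ℕ, i ≤ a ∧ a < b ∧ b ≤ m ∧ t a = δ a - 1 ∧ t b = δ b - 1 ∧
      ∀ k, a < k → k < b → t k = δ k - 2

/-- Partial sum over indices `i..m`. -/
def S (m : ℕ) (r : ℕ → ℤ) (i : ℕ) (t : ℕ → ℤ) : ℤ :=
  ∑ k ∈ Finset.Icc i m, t k * r k

/-- Dangerous prefix: a run of `δ_k - 2` starting at `i` followed by a `δ_j - 1`. -/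
def D (m : ℕ) (δ : ℕ → ℤ) (i : ℕ) (t : ℕ → ℤ) : Prop :=
  ∃ j, i ≤ j ∧ j ≤ m ∧ t j = δ j - 1 ∧ ∀ k, i ≤ k → k < j → t k = δ k - 2

theorem GR.mono {m : ℕ} {δ : ℕ → ℤ} {i i' : ℕ} {t : ℕ → ℤ}
    (h : GR m δ i t) (hii : i ≤ i') : GR m δ i' t := by
  obtain ⟨h1, h2⟩ := h
  refine ⟨fun k hk1 hk2 => h1 k (le_trans hii hk1) hk2, ?_⟩
  rintro ⟨a, b, ha, hb, hc, hd, he, hf⟩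
  exact h2 ⟨a, b, le_trans hii ha, hb, hc, hd, he, hf⟩

theorem S_cons {m : ℕ} (r : ℕ → ℤ) {i : ℕ} (t : ℕ → ℤ) (hi : i ≤ m) :
    S m r i t = t i * r i + S m r (i + 1) t := by
  unfold S
  rw [show Finset.Icc i m = insert i (Finset.Icc (i+1) m) by
    ext k
    simp only [Finset.mem_Icc, Finset.mem_insert]
    omega,
    Finset.sum_insert (by simp)]

theorem S_update {m : ℕ} (r : ℕ → ℤ) (i : ℕ) (v : ℤ) (t : ℕ → ℤ) :
    S m r (i + 1) (Function.update t i v) = S m r (i + 1) t := by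
  unfold S
  apply Finset.sum_congr rfl
  intro k hk
  rw [Finset.mem_Icc] at hk
  rw [Function.update_of_ne (by omega)]

theorem tele (m : ℕ) (r δ : ℕ → ℤ)
    (hrec : ∀ i, 1 ≤ i → i ≤ m → r (i + 1) = δ i * r i - r (i - 1))
    (i : ℕ) (hi : 1 ≤ i) :
    ∀ j, i ≤ j → j ≤ m + 1 →
      ∑ k ∈ Finset.Ico i j, (δ k - 2) * r k = (r (i-1) - r i) - (r (j-1) - r j) := by
  intro j hij
  induction j, hij using Nat.le_induction with
  | base => intro _; simp
  | succ j hij ih =>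
    intro hj
    have hjm : j ≤ m := by omega
    rw [Finset.sum_Ico_succ_top hij, ih (by omega)]
    have h1 : r (j + 1) = δ j * r j - r (j - 1) := hrec j (by omega) hjm
    have h2 : (j + 1) - 1 = j := by omega
    rw [h2]
    have h3 : (δ j - 2) * r j = δ j * r j - 2 * r j := by ring
    have h4 : 1 ≤ j := by omega
    have h5 : j - 1 + 1 = j := by omega
    linarith

theorem D_sum (m : ℕ) (r δ : ℕ → ℤ)
    (hrec : ∀ i, 1 ≤ i → i ≤ m → r (i + 1) = δ i * r i - r (i - 1))
    (hnn : ∀ i, 1 ≤ i → i ≤ m → 0 ≤ r (i + 1))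
    (hpos : ∀ i, i ≤ m → 0 < r i)
    (i : ℕ) (hi : 1 ≤ i) (t : ℕ → ℤ)
    (hb : ∀ k, i ≤ k → k ≤ m → 0 ≤ t k)
    (hD : D m δ i t) : r (i-1) - r i ≤ S m r i t := by
  obtain ⟨j, hij, hjm, htj, hrun⟩ := hD
  have hsum1 : ∑ k ∈ Finset.Ico i j, t k * r k = (r (i-1) - r i) - (r (j-1) - r j) := by
    rw [← tele m r δ hrec i hi j hij (by omega)]
    apply Finset.sum_congr rfl
    intro k hk
    rw [Finset.mem_Ico] at hk
    rw [hrun k hk.1 hk.2]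
  have hrj : r (j + 1) = δ j * r j - r (j - 1) := hrec j (by omega) hjm
  have hsplit : S m r i t = (∑ k ∈ Finset.Ico i j, t k * r k) + t j * r j
      + ∑ k ∈ Finset.Ico (j+1) (m+1), t k * r k := by
    unfold S
    rw [← Finset.Ico_add_one_right_eq_Icc,
      ← Finset.sum_Ico_consecutive _ (show i ≤ j + 1 by omega) (show j + 1 ≤ m + 1 by omega),
      Finset.sum_Ico_succ_top hij]
  have htail : 0 ≤ ∑ k ∈ Finset.Ico (j+1) (m+1), t k * r k := by
    apply Finset.sum_nonneg
    intro k hk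
    rw [Finset.mem_Ico] at hk
    exact mul_nonneg (hb k (by omega) (by omega)) (hpos k (by omega)).le
  have hnnj : 0 ≤ r (j + 1) := hnn j (by omega) hjm
  have hexp : (δ j - 1) * r j = δ j * r j - r j := by ring
  rw [hsplit, hsum1, htj]
  linarith

theorem key (m : ℕ) (r δ : ℕ → ℤ)
    (hδpos : ∀ i, 1 ≤ i → i ≤ m → 0 < δ i)
    (hrec : ∀ i, 1 ≤ i → i ≤ m → r (i + 1) = δ i * r i - r (i - 1))
    (hdec : ∀ i, 1 ≤ i → i ≤ m → r (i + 1) < r i)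
    (hnn : ∀ i, 1 ≤ i → i ≤ m → 0 ≤ r (i + 1))
    (hpos : ∀ i, i ≤ m → 0 < r i)
    (hrm : r m = 1) (hend : r (m + 1) = 0) :
    ∀ d i, 1 ≤ i → i + d = m + 1 →
      (∀ t, GR m δ i t → 0 ≤ S m r i t ∧ S m r i t < r (i-1)) ∧
      (∀ t, GR m δ i t → (r (i-1) - r i ≤ S m r i t ↔ D m δ i t)) ∧
      (∀ x : ℤ, 0 ≤ x → x < r (i-1) → ∃ t, GR m δ i t ∧ S m r i t = x) ∧
      (∀ t t', GR m δ i t → GR m δ i t' → S m r i t = S m r i t' →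
        ∀ k, i ≤ k → k ≤ m → t k = t' k) := by
  intro d
  induction d with
  | zero =>
    intro i hi hieq
    have hi' : i = m + 1 := by omega
    subst hi'
    have hS : ∀ t : ℕ → ℤ, S m r (m+1) t = 0 := by
      intro t
      unfold S
      rw [Finset.Icc_eq_empty (by omega)]
      simp
    have hi1 : (m + 1) - 1 = m := by omega
    refine ⟨?_, ?_, ?_, ?_⟩
    · intro t _
      rw [hS, hi1, hrm]
      norm_num
    · intro t _
      rw [hS, hi1, hrm, hend]
      constructor
      · intro h; exfalso; linarith
      · rintro ⟨j, hj1, hj2, -⟩; omega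
    · intro x hx0 hx1
      rw [hi1, hrm] at hx1
      have hx : x = 0 := by omega
      refine ⟨fun _ => 0, ⟨?_, ?_⟩, ?_⟩
      · intro k hk1 hk2; exact absurd (hk1.trans hk2) (by omega)
      · rintro ⟨a, b, h1, h2, h3, -⟩; omega
      · rw [hS, hx]
    · intro t t' _ _ _ k hk1 hk2; omega
  | succ d ih =>
    intro i hi hieq
    have him : i ≤ m := by omega
    obtain ⟨iha, ihb, ihc, ihd⟩ := ih (i+1) (by omega) (by omega)
    simp only [Nat.add_sub_cancel] at iha ihb ihc ihd
    have hri : 0 < r i := hpos i him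
    have hδi : 0 < δ i := hδpos i hi him
    have hreci : r (i+1) = δ i * r i - r (i-1) := hrec i hi him
    have hdeci : r (i+1) < r i := hdec i hi him
    have hnni : 0 ≤ r (i+1) := hnn i hi him
    have ha : ∀ t, GR m δ i t → 0 ≤ S m r i t ∧ S m r i t < r (i-1) := by
      intro t ht
      have ht' : GR m δ (i+1) t := ht.mono (Nat.le_succ i)
      have hy := iha t ht'
      have hbnd := ht.1 i le_rfl him
      rw [S_cons r t him]
      constructor
      · have : 0 ≤ t i * r i := mul_nonneg hbnd.1 hri.le
        linarith [hy.1]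
      · rcases eq_or_lt_of_le hbnd.2 with heq | hlt
        · have hnd : ¬ D m δ (i+1) t := by
            rintro ⟨j, hj1, hj2, hj3, hj4⟩
            exact ht.2 ⟨i, j, le_rfl, by omega, hj2, heq, hj3,
              fun k hk1 hk2 => hj4 k (by omega) hk2⟩
          have hlt2 : ¬ (r i - r (i+1) ≤ S m r (i+1) t) := fun h => hnd ((ihb t ht').mp h)
          push_neg at hlt2
          have h2 : t i * r i = (δ i - 1) * r i := by rw [heq]
          have h3 : (δ i - 1) * r i = δ i * r i - r i := by ring
          linarith
        · have h2 : t i ≤ δ i - 2 := by omega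
          have h3 : t i * r i ≤ (δ i - 2) * r i := mul_le_mul_of_nonneg_right h2 hri.le
          have h4 : (δ i - 2) * r i = δ i * r i - 2 * r i := by ring
          linarith [hy.2]
    have hbiff : ∀ t, GR m δ i t → (r (i-1) - r i ≤ S m r i t ↔ D m δ i t) := by
      intro t ht
      have ht' : GR m δ (i+1) t := ht.mono (Nat.le_succ i)
      have hy := iha t ht'
      have hbnd := ht.1 i le_rfl him
      constructor
      · intro hS
        rw [S_cons r t him] at hS
        rcases eq_or_lt_of_le hbnd.2 with heq | hlt
        · exact ⟨i, le_rfl, him, heq,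
            fun k hk1 hk2 => absurd (hk1.trans_lt hk2) (lt_irrefl i)⟩
        · have h2 : t i ≤ δ i - 2 := by omega
          rcases eq_or_lt_of_le h2 with heq2 | hlt2
          · have h4 : t i * r i = δ i * r i - 2 * r i := by rw [heq2]; ring
            have hge : r i - r (i+1) ≤ S m r (i+1) t := by linarith
            obtain ⟨j, hj1, hj2, hj3, hj4⟩ := (ihb t ht').mp hge
            refine ⟨j, by omega, hj2, hj3, fun k hk1 hk2 => ?_⟩
            rcases eq_or_lt_of_le hk1 with h | h
            · rw [← h]; exact heq2
            · exact hj4 k (by omega) hk2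
          · exfalso
            have h5 : t i ≤ δ i - 3 := by omega
            have h6 : t i * r i ≤ (δ i - 3) * r i := mul_le_mul_of_nonneg_right h5 hri.le
            have h7 : (δ i - 3) * r i = δ i * r i - 3 * r i := by ring
            linarith [hy.2]
      · intro hD
        exact D_sum m r δ hrec hnn hpos i hi t (fun k hk1 hk2 => (ht.1 k hk1 hk2).1) hD
    have hc : ∀ x : ℤ, 0 ≤ x → x < r (i-1) → ∃ t, GR m δ i t ∧ S m r i t = x := by
      intro x hx0 hx1
      by_cases hcase : x < (δ i - 1) * r i
      · set v := x / r i with hv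
        set y := x % r i with hy2
        have hy0 : 0 ≤ y := Int.emod_nonneg x (ne_of_gt hri)
        have hyr : y < r i := Int.emod_lt_of_pos x hri
        have hvx : v * r i + y = x := by
          rw [hv, hy2, mul_comm]
          exact Int.mul_ediv_add_emod x (r i)
        have hv0 : 0 ≤ v := Int.ediv_nonneg hx0 hri.le
        have hv2 : v ≤ δ i - 2 := by
          have : v < δ i - 1 := by
            rw [hv]
            exact (Int.ediv_lt_iff_lt_mul hri).mpr hcase
          omega
        obtain ⟨s, hs, hss⟩ := ihc y hy0 hyr
        refine ⟨Function.update s i v, ⟨?_, ?_⟩, ?_⟩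
        · intro k hk1 hk2
          rcases eq_or_lt_of_le hk1 with h | h
          · rw [← h, Function.update_self]
            exact ⟨hv0, by omega⟩
          · rw [Function.update_of_ne (by omega)]
            exact hs.1 k (by omega) hk2
        · rintro ⟨a, b, h1, h2, h3, h4, h5, h6⟩
          rcases eq_or_lt_of_le h1 with h | h
          · rw [← h, Function.update_self] at h4
            omega
          · apply hs.2
            refine ⟨a, b, by omega, h2, h3, ?_, ?_, ?_⟩
            · rwa [Function.update_of_ne (by omega)] at h4
            · rwa [Function.update_of_ne (by omega)] at h5
            · intro k hk1 hk2
              have := h6 k hk1 hk2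
              rwa [Function.update_of_ne (by omega)] at this
        · rw [S_cons r _ him, Function.update_self, S_update, hss]
          exact hvx
      · push_neg at hcase
        set y := x - (δ i - 1) * r i with hy2
        have hy0 : 0 ≤ y := by rw [hy2]; linarith
        have hexp : (δ i - 1) * r i = δ i * r i - r i := by ring
        have hyr : y < r i - r (i+1) := by rw [hy2]; linarith
        have hyr' : y < r i := by linarith
        obtain ⟨s, hs, hss⟩ := ihc y hy0 hyr'
        have hnd : ¬ D m δ (i+1) s := by
          intro hd
          have := (ihb s hs).mpr hd
          rw [hss] at this
          linarith
        refine ⟨Function.update s i (δ i - 1), ⟨?_, ?_⟩, ?_⟩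
        · intro k hk1 hk2
          rcases eq_or_lt_of_le hk1 with h | h
          · rw [← h, Function.update_self]
            exact ⟨by omega, le_rfl⟩
          · rw [Function.update_of_ne (by omega)]
            exact hs.1 k (by omega) hk2
        · rintro ⟨a, b, h1, h2, h3, h4, h5, h6⟩
          rcases eq_or_lt_of_le h1 with h | h
          · apply hnd
            refine ⟨b, by omega, h3, ?_, ?_⟩
            · rwa [Function.update_of_ne (by omega)] at h5
            · intro k hk1 hk2
              have := h6 k (by omega) hk2
              rwa [Function.update_of_ne (by omega)] at this
          · apply hs.2
            refine ⟨a, b, by omega, h2, h3, ?_, ?_, ?_⟩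
            · rwa [Function.update_of_ne (by omega)] at h4
            · rwa [Function.update_of_ne (by omega)] at h5
            · intro k hk1 hk2
              have := h6 k hk1 hk2
              rwa [Function.update_of_ne (by omega)] at this
        · rw [S_cons r _ him, Function.update_self, S_update, hss, hy2]
          ring
    have hd : ∀ t t', GR m δ i t → GR m δ i t' → S m r i t = S m r i t' →
        ∀ k, i ≤ k → k ≤ m → t k = t' k := by
      intro t t' ht ht' hSeq k hk1 hk2
      have h1 : GR m δ (i+1) t := ht.mono (Nat.le_succ i)
      have h1' : GR m δ (i+1) t' := ht'.mono (Nat.le_succ i)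
      have hy := iha t h1
      have hy' := iha t' h1'
      rw [S_cons r t him, S_cons r t' him] at hSeq
      have hti : t i = t' i := by
        rcases lt_trichotomy (t i) (t' i) with h | h | h
        · exfalso
          have h2 : t i + 1 ≤ t' i := by omega
          have h3 : (t i + 1) * r i ≤ t' i * r i := mul_le_mul_of_nonneg_right h2 hri.le
          have h4 : (t i + 1) * r i = t i * r i + r i := by ring
          linarith [hy.1, hy.2, hy'.1, hy'.2]
        · exact h
        · exfalso
          have h2 : t' i + 1 ≤ t i := by omega
          have h3 : (t' i + 1) * r i ≤ t i * r i := mul_le_mul_of_nonneg_right h2 hri.le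
          have h4 : (t' i + 1) * r i = t' i * r i + r i := by ring
          linarith [hy.1, hy.2, hy'.1, hy'.2]
      rcases eq_or_lt_of_le hk1 with h | h
      · rw [← h]; exact hti
      · have hStail : S m r (i+1) t = S m r (i+1) t' := by
          rw [hti] at hSeq; linarith
        exact ihd t t' h1 h1' hStail k (by omega) hk2
    exact ⟨ha, hbiff, hc, hd⟩

end Stmt19Aux

/-- for coprime r₀ > r₁ > 0 with Euclidean sequence
r₀, r₁, …, r_m (r_{i+1} = δ_i r_i − r_{i−1}, 0 ≤ r_{i+1} < r_i, ending at 0),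
a nonnegative integer x has a good representation iff 0 ≤ x ≤ r₀ − 1, and in
that case the good representation is unique. -/
theorem stmt_19 (r₀ r₁ : ℤ) (h01 : r₁ < r₀) (h1pos : 0 < r₁)
    (hcop : IsCoprime r₀ r₁)
    (m : ℕ) (hm : 1 ≤ m) (r δ : ℕ → ℤ)
    (hr0 : r 0 = r₀) (hr1 : r 1 = r₁)
    (hδpos : ∀ i, 1 ≤ i → i ≤ m → 0 < δ i)
    (hrec : ∀ i, 1 ≤ i → i ≤ m → r (i + 1) = δ i * r i - r (i - 1))
    (hdec : ∀ i, 1 ≤ i → i ≤ m → r (i + 1) < r i)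
    (hnn : ∀ i, 1 ≤ i → i ≤ m → 0 ≤ r (i + 1))
    (hpos : ∀ i, i ≤ m → 0 < r i)
    (hend : r (m + 1) = 0) :
    ∀ x : ℤ,
      ((∃ t : ℕ → ℤ, GoodRep m r δ x t) ↔ (0 ≤ x ∧ x ≤ r₀ - 1)) ∧
      (∀ t t' : ℕ → ℤ, GoodRep m r δ x t → GoodRep m r δ x t' →
        ∀ i, 1 ≤ i → i ≤ m → t i = t' i) := by
  have hcopchain : ∀ i, i ≤ m → IsCoprime (r i) (r (i + 1)) := by
    intro i
    induction i with
    | zero => intro _; rw [hr0, hr1]; exact hcop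
    | succ n ihn =>
      intro h
      have h1 : IsCoprime (r n) (r (n + 1)) := ihn (by omega)
      have hr2 : r (n + 1 + 1) = δ (n + 1) * r (n + 1) - r (n + 1 - 1) :=
        hrec (n + 1) (by omega) h
      rw [show n + 1 - 1 = n from rfl] at hr2
      have heq : r (n + 1 + 1) = -r n + r (n + 1) * δ (n + 1) := by rw [hr2]; ring
      rw [heq]
      exact (h1.symm.neg_right).add_mul_left_right _
  have hrm : r m = 1 := by
    have h1 := hcopchain m le_rfl
    rw [hend] at h1
    have hu := isCoprime_zero_right.mp h1
    rcases Int.isUnit_iff.mp hu with h | h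
    · exact h
    · have := hpos m le_rfl; omega
  obtain ⟨ha, hb, hc, hd⟩ :=
    Stmt19Aux.key m r δ hδpos hrec hdec hnn hpos hrm hend m 1 le_rfl (by omega)
  have hr01 : r (1 - 1) = r₀ := by rw [show (1:ℕ) - 1 = 0 from rfl, hr0]
  intro x
  constructor
  · constructor
    · rintro ⟨t, hb1, hs1, hp1⟩
      have h2 := ha t ⟨hb1, hp1⟩
      have h3 : Stmt19Aux.S m r 1 t = x := by
        unfold Stmt19Aux.S; exact hs1.symm
      rw [h3, hr01] at h2
      exact ⟨h2.1, by omega⟩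
    · rintro ⟨hx0, hx1⟩
      obtain ⟨t, ht, hts⟩ := hc x hx0 (by rw [hr01]; omega)
      exact ⟨t, ht.1, hts.symm, ht.2⟩
  · intro t t' ht ht' k hk1 hk2
    have hS : Stmt19Aux.S m r 1 t = Stmt19Aux.S m r 1 t' := by
      unfold Stmt19Aux.S
      rw [← ht.2.1, ← ht'.2.1]
    exact hd t t' ⟨ht.1, ht.2.2⟩ ⟨ht'.1, ht'.2.2⟩ hS k hk1 hk2
end
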